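/- arXiv:1110.3899 — 12 statements merged into one kernel-verified Lean document; each statement's English description precedes it below -/
import Mathlib

section
/- Let (M,d) be a proper separable metric space and μ ∈ P₁(M). Then x is a Fréchet median of μ if and only if for every 1-Lipschitz function φ : M → ℝ one has φ(x) ≤ f*_μ + ∫ φ(p) dμ(p), where f*_μ is the minimum of f_μ(x) = ∫ d(x,p) dμ(p). -/
/-!
If `x` minimizes `f_μ = ∫ d(·, p) dμ(p)`, then for 1-Lipschitz `φ` integrating
`φ x ≤ d(x, p) + φ p` against `μ` gives `φ x ≤ f_μ x + ∫ φ dμ = f*_μ + ∫ φ dμ`.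
Conversely, testing with `φ = -d(x, ·)` yields `f_μ x ≤ f*_μ`.
-/

open MeasureTheory

theorem LipschitzWith.integrable_of_integrable_dist {M : Type*} [PseudoMetricSpace M]
    [MeasurableSpace M] [BorelSpace M] {μ : Measure M} [IsFiniteMeasure μ]
    {K : NNReal} {φ : M → ℝ} (hφ : LipschitzWith K φ) {x₀ : M}
    (hmom : Integrable (dist x₀ ·) μ) : Integrable φ μ := by
  refine ((hmom.const_mul K).add (integrable_const ‖φ x₀‖)).mono'
    hφ.continuous.aestronglyMeasurable (Filter.Eventually.of_forall fun p => ?_)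
  calc ‖φ p‖ ≤ ‖φ x₀‖ + dist (φ p) (φ x₀) := norm_le_norm_add_norm_sub' _ _
    _ ≤ ‖φ x₀‖ + K * dist p x₀ := by gcongr; exact hφ.dist_le_mul p x₀
    _ = K * dist x₀ p + ‖φ x₀‖ := by rw [dist_comm]; ring

theorem LipschitzWith.le_integral_dist_add_integral {M : Type*} [PseudoMetricSpace M]
    [MeasurableSpace M] {μ : Measure M} [IsProbabilityMeasure μ] {φ : M → ℝ}
    (hφ : LipschitzWith 1 φ) (hφμ : Integrable φ μ) {x : M}
    (hdist : Integrable (dist x ·) μ) :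
    φ x ≤ (∫ p, dist x p ∂μ) + ∫ p, φ p ∂μ := by
  have hpointwise (p : M) : φ x ≤ dist x p + φ p := by
    simpa [add_comm] using hφ.le_add_mul x p
  calc φ x = ∫ _, φ x ∂μ := by simp
    _ ≤ ∫ p, dist x p + φ p ∂μ :=
      integral_mono (integrable_const _) (hdist.add hφμ) hpointwise
    _ = (∫ p, dist x p ∂μ) + ∫ p, φ p ∂μ := integral_add hdist hφμ

theorem frechet_median_iff_lipschitz_characterization_general
    {M : Type*} [MetricSpace M]
    [MeasurableSpace M] [BorelSpace M]
    (μ : Measure M) [IsProbabilityMeasure μ]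
    (x₀ : M) (hmom : Integrable (fun p => dist x₀ p) μ)
    (m : M) (hm : ∀ y : M, (∫ p, dist m p ∂μ) ≤ ∫ p, dist y p ∂μ)
    (x : M) :
    (∀ y : M, (∫ p, dist x p ∂μ) ≤ ∫ p, dist y p ∂μ) ↔
      (∀ φ : M → ℝ, LipschitzWith 1 φ → φ x ≤ (∫ p, dist m p ∂μ) + ∫ p, φ p ∂μ) := by
  constructor
  · intro hx φ hφ
    rw [← le_antisymm (hx m) (hm x)]
    exact hφ.le_integral_dist_add_integral (hφ.integrable_of_integrable_dist hmom)
      ((LipschitzWith.dist_right x).integrable_of_integrable_dist hmom)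
  · intro h y
    have hneg := h _ (LipschitzWith.dist_right x).neg
    simp only [Pi.neg_apply, dist_self, neg_zero, integral_neg] at hneg
    linarith [hm y]

/-- In a proper separable metric space, `x` is a Fréchet median of
`μ ∈ P₁(M)` if and only if `φ x ≤ f*_μ + ∫ φ dμ` for every 1-Lipschitz `φ : M → ℝ`.
Here `f*_μ = f_μ m` for a global minimizer `m` of `f_μ`. -/
theorem frechet_median_iff_lipschitz_characterization
    {M : Type*} [MetricSpace M] [ProperSpace M] [TopologicalSpace.SeparableSpace M]
    [MeasurableSpace M] [BorelSpace M]
    (μ : Measure M) [IsProbabilityMeasure μ]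
    (x₀ : M) (hmom : Integrable (fun p => dist x₀ p) μ)
    (m : M) (hm : ∀ y : M, (∫ p, dist m p ∂μ) ≤ ∫ p, dist y p ∂μ)
    (x : M) :
    (∀ y : M, (∫ p, dist x p ∂μ) ≤ ∫ p, dist y p ∂μ) ↔
      (∀ φ : M → ℝ, LipschitzWith 1 φ → φ x ≤ (∫ p, dist m p ∂μ) + ∫ p, φ p ∂μ) :=
  frechet_median_iff_lipschitz_characterization_general μ x₀ hmom m hm x
end

section
/- Let (M,d) be a proper metric space, (μₙ) a sequence in P₁(M) and μ ∈ P₁(M). If f_{μₙ} converges uniformly on M to f_μ, then for every ε > 0 there exists N such that for all n ≥ N, every Fréchet median of μₙ lies within distance ε of the set Q_μ of Fréchet medians of μ. -/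
open MeasureTheory Metric Filter Topology

section Aux

variable {M : Type*} [MetricSpace M] [MeasurableSpace M] [BorelSpace M]
  (μ : Measure M) [IsProbabilityMeasure μ] (x₀ : M)

lemma frechet_int (hmom : Integrable (fun p => dist x₀ p) μ) (x : M) :
    Integrable (fun p => dist x p) μ := by
  refine ((integrable_const (dist x x₀)).add hmom).mono' ?_ ?_
  · exact (continuous_const.dist continuous_id).aestronglyMeasurable
  · filter_upwards with p
    rw [Real.norm_eq_abs, abs_of_nonneg dist_nonneg]
    exact dist_triangle x x₀ p

lemma frechet_lip (hmom : Integrable (fun p => dist x₀ p) μ) :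
    LipschitzWith 1 (fun x => ∫ p, dist x p ∂μ) := by
  refine LipschitzWith.of_dist_le_mul fun x y => ?_
  rw [NNReal.coe_one, one_mul, Real.dist_eq]
  have h1 := frechet_int μ x₀ hmom x
  have h2 := frechet_int μ x₀ hmom y
  rw [← integral_sub h1 h2]
  calc |∫ p, (dist x p - dist y p) ∂μ|
      ≤ ∫ p, |dist x p - dist y p| ∂μ := by
        simpa [Real.norm_eq_abs] using
          norm_integral_le_integral_norm (μ := μ) (fun p => dist x p - dist y p)
    _ ≤ ∫ _p, dist x y ∂μ :=
        integral_mono (h1.sub h2).abs (integrable_const _)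
          (fun p => abs_dist_sub_le x y p)
    _ = dist x y := by simp

lemma frechet_coercive (hmom : Integrable (fun p => dist x₀ p) μ) (x : M) :
    dist x x₀ - (∫ p, dist x₀ p ∂μ) ≤ ∫ p, dist x p ∂μ := by
  have h : ∫ p, (dist x x₀ - dist x₀ p) ∂μ ≤ ∫ p, dist x p ∂μ :=
    integral_mono ((integrable_const _).sub hmom) (frechet_int μ x₀ hmom x)
      (fun p => by have := dist_triangle x p x₀; rw [dist_comm p x₀] at this; linarith)
  rw [integral_sub (integrable_const _) hmom] at h
  simpa using h

lemma frechet_min_exists [ProperSpace M] (hmom : Integrable (fun p => dist x₀ p) μ) :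
    ∃ q : M, ∀ y, (∫ p, dist q p ∂μ) ≤ ∫ p, dist y p ∂μ := by
  set f : M → ℝ := fun x => ∫ p, dist x p ∂μ with hf
  have hcont : Continuous f := (frechet_lip μ x₀ hmom).continuous
  set R : ℝ := 2 * f x₀ + 1 with hR
  have hfx₀ : 0 ≤ f x₀ := integral_nonneg fun p => dist_nonneg
  have hK : IsCompact (closedBall x₀ R) := isCompact_closedBall x₀ R
  have hx₀K : x₀ ∈ closedBall x₀ R := mem_closedBall_self (by linarith)
  obtain ⟨q, hqK, hq⟩ := hK.exists_isMinOn ⟨x₀, hx₀K⟩ hcont.continuousOn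
  refine ⟨q, fun y => ?_⟩
  by_cases hy : y ∈ closedBall x₀ R
  · exact isMinOn_iff.mp hq y hy
  · have h1 : f q ≤ f x₀ := isMinOn_iff.mp hq x₀ hx₀K
    have h2 : R < dist y x₀ := by simpa [mem_closedBall, not_le] using hy
    have h3 := frechet_coercive μ x₀ hmom y
    have : f x₀ ≤ f y := by
      have hd : dist y x₀ = dist y x₀ := rfl
      linarith
    linarith

lemma frechet_delta [ProperSpace M] (hmom : Integrable (fun p => dist x₀ p) μ)
    {q₀ : M} (hq₀ : ∀ y, (∫ p, dist q₀ p ∂μ) ≤ ∫ p, dist y p ∂μ)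
    {ε : ℝ} (hε : 0 < ε) :
    ∃ δ > (0 : ℝ), ∀ x : M, (∫ p, dist x p ∂μ) ≤ (∫ p, dist q₀ p ∂μ) + δ →
      ∃ q : M, (∀ y, (∫ p, dist q p ∂μ) ≤ ∫ p, dist y p ∂μ) ∧ dist x q < ε := by
  set f : M → ℝ := fun x => ∫ p, dist x p ∂μ with hf
  have hcont : Continuous f := (frechet_lip μ x₀ hmom).continuous
  by_contra hcon
  push_neg at hcon
  have hchoice : ∀ k : ℕ, ∃ x : M, f x ≤ f q₀ + 1 / (k + 1) ∧
      ∀ q : M, (∀ y, f q ≤ f y) → ε ≤ dist x q := by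
    intro k
    obtain ⟨x, hx1, hx2⟩ := hcon (1 / (k + 1)) (by positivity)
    exact ⟨x, hx1, hx2⟩
  choose x hx1 hx2 using hchoice
  set K : Set M := closedBall x₀ (f q₀ + 1 + ∫ p, dist x₀ p ∂μ) with hKdef
  have hK : IsCompact K := isCompact_closedBall _ _
  have hxK : ∀ k, x k ∈ K := by
    intro k
    have h1 := frechet_coercive μ x₀ hmom (x k)
    have h2 : f (x k) ≤ f q₀ + 1 := by
      have := hx1 k
      have hle : (1 : ℝ) / (k + 1) ≤ 1 := by
        rw [div_le_one (by positivity)]; linarith [Nat.cast_nonneg (α := ℝ) k]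
      linarith
    simp only [hKdef, mem_closedBall]
    linarith
  obtain ⟨a, haK, φ, hφ, htend⟩ := hK.tendsto_subseq hxK
  have hfa : f a ≤ f q₀ := by
    have h1 : Tendsto (fun k => f (x (φ k))) atTop (𝓝 (f a)) :=
      (hcont.tendsto a).comp htend
    have h2 : Tendsto (fun k : ℕ => f q₀ + 1 / (φ k + 1)) atTop (𝓝 (f q₀ + 0)) := by
      refine Tendsto.const_add _ ?_
      have : Tendsto (fun k : ℕ => (1 : ℝ) / (k + 1)) atTop (𝓝 0) :=
        tendsto_one_div_add_atTop_nhds_zero_nat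
      exact this.comp (hφ.tendsto_atTop)
    rw [add_zero] at h2
    exact le_of_tendsto_of_tendsto' h1 h2 (fun k => hx1 (φ k))
  have hamin : ∀ y, f a ≤ f y := fun y => hfa.trans (hq₀ y)
  have hdist : Tendsto (fun k => dist (x (φ k)) a) atTop (𝓝 0) :=
    tendsto_iff_dist_tendsto_zero.mp htend
  obtain ⟨k, hk⟩ := (hdist.eventually_lt_const hε).exists
  exact absurd (hx2 (φ k) a hamin) (not_le.mpr hk)

end Aux

/-- Consistency of Fréchet medians: if the first-moment functions of
`μₙ` converge uniformly on `M` to that of `μ`, then eventually every Fréchet median of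
`μₙ` lies within distance `ε` of the set of Fréchet medians of `μ`. -/
theorem frechet_medians_consistency
    {M : Type*} [MetricSpace M] [ProperSpace M]
    [MeasurableSpace M] [BorelSpace M]
    (μseq : ℕ → Measure M) (μ : Measure M)
    [∀ n, IsProbabilityMeasure (μseq n)] [IsProbabilityMeasure μ]
    (x₀ : M) (hmomseq : ∀ n, Integrable (fun p => dist x₀ p) (μseq n))
    (hmom : Integrable (fun p => dist x₀ p) μ)
    (hconv : TendstoUniformly (fun n x => ∫ p, dist x p ∂(μseq n))
      (fun x => ∫ p, dist x p ∂μ) atTop) :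
    ∀ ε > (0 : ℝ), ∃ N : ℕ, ∀ n ≥ N, ∀ x : M,
      (∀ y : M, (∫ p, dist x p ∂(μseq n)) ≤ ∫ p, dist y p ∂(μseq n)) →
      ∃ q : M, (∀ y : M, (∫ p, dist q p ∂μ) ≤ ∫ p, dist y p ∂μ) ∧ dist x q < ε := by
  intro ε hε
  obtain ⟨q₀, hq₀⟩ := frechet_min_exists μ x₀ hmom
  obtain ⟨δ, hδ, hδprop⟩ := frechet_delta μ x₀ hmom hq₀ hε
  have hN : ∀ᶠ n in atTop, ∀ x : M,
      dist ((fun x => ∫ p, dist x p ∂μ) x) ((fun n x => ∫ p, dist x p ∂(μseq n)) n x)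
        < δ / 2 := by
    have := Metric.tendstoUniformly_iff.mp hconv (δ / 2) (by linarith)
    exact this
  obtain ⟨N, hNprop⟩ := eventually_atTop.mp hN
  refine ⟨N, fun n hn x hxmed => ?_⟩
  have h1 : |(∫ p, dist x p ∂μ) - ∫ p, dist x p ∂(μseq n)| < δ / 2 := by
    have := hNprop n hn x
    simpa [Real.dist_eq] using this
  have h2 : |(∫ p, dist q₀ p ∂μ) - ∫ p, dist q₀ p ∂(μseq n)| < δ / 2 := by
    have := hNprop n hn q₀
    simpa [Real.dist_eq] using this
  have h3 : (∫ p, dist x p ∂(μseq n)) ≤ ∫ p, dist q₀ p ∂(μseq n) := hxmed q₀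
  have h4 : (∫ p, dist x p ∂μ) ≤ (∫ p, dist q₀ p ∂μ) + δ := by
    have ha := abs_lt.mp h1
    have hb := abs_lt.mp h2
    linarith [ha.1, ha.2, hb.1, hb.2]
  exact hδprop x h4
end

section
/- Let (M,d) be a proper separable metric space, (Xₙ) a sequence of i.i.d. M-valued random variables with law μ ∈ P₁(M), and for each n let mₙ be a Fréchet median of the empirical measure μₙ = (1/n) Σ_{k=1}^n δ_{X_k}. If μ has a unique Fréchet median m, then mₙ → m almost surely. -/
/-!
For a fixed `y`, the strong law of large numbers applied to `d(y, Xₖ)` gives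
`∫ d(y,·) dμₙ → ∫ d(y,·) dμ` almost surely, hence simultaneously for all `y` in a countable
dense set and at `m`. First-moment functions of probability measures are 1-Lipschitz, so this
convergence is uniform on compact sets. The triangle inequality
`d(x,m) ≤ ∫ d(x,·) dν + ∫ d(m,·) dν` eventually keeps the medians `mₙ` in a fixed closed
ball, compact because `M` is proper, and on that ball the strict minimality of `m` forces
`mₙ → m`.
-/

open MeasureTheory Metric Filter ENNReal Topology

section UniformConvergence

variable {ι M N : Type*} [PseudoMetricSpace M] [PseudoMetricSpace N] {l : Filter ι}

theorem tendstoUniformlyOn_of_lipschitzWith_of_dense {K : NNReal} {g : ι → M → N} {f : M → N}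
    (hg : ∀ n, LipschitzWith K (g n)) (hf : LipschitzWith K f) {D : Set M} (hD : Dense D)
    (hconv : ∀ y ∈ D, Tendsto (fun n => g n y) l (𝓝 (f y))) {s : Set M} (hs : IsCompact s) :
    TendstoUniformlyOn g f l s := by
  rw [Metric.tendstoUniformlyOn_iff]
  intro ε hε
  set δ : ℝ := ε / (3 * (K + 1)) with hδ_def
  have hδ : 0 < δ := by positivity
  have hKδ : K * δ < ε / 3 := by
    rw [hδ_def, mul_div_assoc', div_lt_div_iff₀ (by positivity) (by norm_num)]
    nlinarith
  obtain ⟨t, htD, ht, hst⟩ : ∃ t ⊆ D, t.Finite ∧ s ⊆ ⋃ d ∈ t, ball d δ :=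
    hs.elim_finite_subcover_image (fun _ _ => isOpen_ball) fun x _ => by
      simpa [dist_comm] using hD.exists_dist_lt x hδ
  have happrox : ∀ᶠ n in l, ∀ d ∈ t, dist (g n d) (f d) < ε / 3 :=
    ht.eventually_all.2 fun d hd => Metric.tendsto_nhds.1 (hconv d (htD hd)) _ (by positivity)
  filter_upwards [happrox] with n hn x hx
  obtain ⟨d, hdt, hxd⟩ := Set.mem_iUnion₂.1 (hst hx)
  have hKxd : K * dist x d ≤ K * δ := by gcongr; exact (mem_ball.1 hxd).le
  calc dist (f x) (g n x) ≤ dist (f x) (f d) + dist (f d) (g n d) + dist (g n d) (g n x) :=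
        dist_triangle4 _ _ _ _
    _ ≤ K * dist x d + dist (g n d) (f d) + K * dist x d := by
        rw [dist_comm (f d), dist_comm (g n d) (g n x)]
        gcongr
        · exact hf.dist_le_mul x d
        · exact (hg n).dist_le_mul x d
    _ < ε / 3 + ε / 3 + ε / 3 := by linarith [hn d hdt]
    _ = ε := by ring

theorem tendsto_of_tendstoUniformlyOn_of_forall_lt [ProperSpace M] {f : M → ℝ}
    {g : ι → M → ℝ} {z : ι → M} {m : M} {R : ℝ} (hf : Continuous f)
    (hm : ∀ x ≠ m, f m < f x) (hunif : TendstoUniformlyOn g f l (closedBall m R))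
    (hbdd : ∀ᶠ n in l, dist (z n) m ≤ R) (hz : ∀ n, g n (z n) ≤ g n m) :
    Tendsto z l (𝓝 m) := by
  refine Metric.tendsto_nhds.2 fun ε hε => ?_
  set K := closedBall m R \ ball m ε
  have hK : IsCompact K := (isCompact_closedBall m R).diff isOpen_ball
  obtain ⟨c, hfmc, hcK⟩ : ∃ c, f m < c ∧ ∀ x ∈ K, c ≤ f x :=
    hK.exists_forall_le' hf.continuousOn fun x hx =>
      hm x fun h => hx.2 (h ▸ mem_ball_self hε)
  have hδ : 0 < (c - f m) / 2 := by linarith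
  filter_upwards [hbdd, Metric.tendstoUniformlyOn_iff.1 hunif _ hδ] with n hzR hclose
  by_contra! hzε
  have hR : 0 ≤ R := dist_nonneg.trans hzR
  have hfz := hcK (z n) ⟨mem_closedBall.2 hzR, fun h => (mem_ball.1 h).not_ge hzε⟩
  have hgz := abs_sub_lt_iff.1 (hclose (z n) (mem_closedBall.2 hzR))
  have hgm := abs_sub_lt_iff.1 (hclose m (mem_closedBall_self hR))
  linarith [hz n]

end UniformConvergence

section FirstMoment

variable {M : Type*} [PseudoMetricSpace M] [MeasurableSpace M]

noncomputable def firstMoment (ν : Measure M) (x : M) : ℝ := ∫ p, dist x p ∂ν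

def IsFrechetMedian (ν : Measure M) (x : M) : Prop := ∀ y, firstMoment ν x ≤ firstMoment ν y

variable [OpensMeasurableSpace M] {ν : Measure M} {x₀ : M}

theorem integrable_dist_of_integrable_dist [IsFiniteMeasure ν]
    (h : Integrable (fun p => dist x₀ p) ν) (y : M) : Integrable (fun p => dist y p) ν :=
  ((integrable_const (dist y x₀)).add h).mono'
    (continuous_const.dist continuous_id).aestronglyMeasurable
    (ae_of_all _ fun p => by
      rw [Real.norm_of_nonneg dist_nonneg]
      exact dist_triangle y x₀ p)

variable [IsProbabilityMeasure ν]

theorem lipschitzWith_firstMoment (h : Integrable (fun p => dist x₀ p) ν) :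
    LipschitzWith 1 (firstMoment ν) := by
  refine LipschitzWith.of_dist_le_mul fun x y => ?_
  have hx := integrable_dist_of_integrable_dist h x
  have hy := integrable_dist_of_integrable_dist h y
  calc dist (firstMoment ν x) (firstMoment ν y) = |∫ p, (dist x p - dist y p) ∂ν| := by
        rw [Real.dist_eq, firstMoment, firstMoment, integral_sub hx hy]
    _ ≤ ∫ p, |dist x p - dist y p| ∂ν := abs_integral_le_integral_abs
    _ ≤ ∫ _, dist x y ∂ν :=
        integral_mono (hx.sub hy).abs (integrable_const _) fun p => abs_dist_sub_le x y p
    _ = 1 * dist x y := by simp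

theorem dist_le_firstMoment_add_firstMoment (h : Integrable (fun p => dist x₀ p) ν) (x y : M) :
    dist x y ≤ firstMoment ν x + firstMoment ν y := by
  have hx := integrable_dist_of_integrable_dist h x
  have hy := integrable_dist_of_integrable_dist h y
  calc dist x y = ∫ _, dist x y ∂ν := by simp
    _ ≤ ∫ p, (dist x p + dist y p) ∂ν :=
        integral_mono (integrable_const _) (hx.add hy) fun p => dist_triangle_right x y p
    _ = firstMoment ν x + firstMoment ν y := integral_add hx hy

end FirstMoment

section EmpiricalMeasure

variable {M : Type*} [MeasurableSpace M]

/-- `empiricalMeasure x 0 = 0`, so it is a probability measure only for `n ≠ 0`. -/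
noncomputable def empiricalMeasure (x : ℕ → M) (n : ℕ) : Measure M :=
  (n : ℝ≥0∞)⁻¹ • ∑ k ∈ Finset.range n, Measure.dirac (x k)

theorem isProbabilityMeasure_empiricalMeasure (x : ℕ → M) {n : ℕ} (hn : n ≠ 0) :
    IsProbabilityMeasure (empiricalMeasure x n) := by
  constructor
  simp [empiricalMeasure, ENNReal.inv_mul_cancel (Nat.cast_ne_zero.2 hn) (natCast_ne_top n)]

variable [MeasurableSingletonClass M]

theorem integrable_empiricalMeasure (x : ℕ → M) {n : ℕ} (hn : n ≠ 0) (f : M → ℝ) :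
    Integrable f (empiricalMeasure x n) :=
  (integrable_finsetSum_measure.2 fun _ _ => integrable_dirac enorm_lt_top).smul_measure
    (ENNReal.inv_ne_top.2 (Nat.cast_ne_zero.2 hn))

theorem integral_empiricalMeasure (x : ℕ → M) (n : ℕ) (f : M → ℝ) :
    ∫ p, f p ∂empiricalMeasure x n = (∑ k ∈ Finset.range n, f (x k)) / n := by
  rw [empiricalMeasure, integral_smul_measure,
    integral_finsetSum_measure fun _ _ => integrable_dirac enorm_lt_top]
  simp [integral_dirac, ENNReal.toReal_inv, div_eq_inv_mul]

theorem ae_tendsto_integral_empiricalMeasure {Ω : Type*} [MeasurableSpace Ω] {P : Measure Ω}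
    {μ : Measure M} {X : ℕ → Ω → M} (hX : ∀ n, AEMeasurable (X n) P)
    (hindep : Pairwise fun i j => ProbabilityTheory.IndepFun (X i) (X j) P)
    (hlaw : ∀ n, P.map (X n) = μ) {f : M → ℝ} (hf : Measurable f) (hfμ : Integrable f μ) :
    ∀ᵐ ω ∂P, Tendsto (fun n => ∫ p, f p ∂empiricalMeasure (X · ω) n) atTop
      (𝓝 (∫ p, f p ∂μ)) := by
  have hident : ∀ i, ProbabilityTheory.IdentDistrib (f ∘ X i) (f ∘ X 0) P P := fun i =>
    (ProbabilityTheory.IdentDistrib.mk (hX i) (hX 0) (by rw [hlaw, hlaw])).comp hf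
  have hint : Integrable (f ∘ X 0) P := by
    rw [← hlaw 0] at hfμ
    exact hfμ.comp_aemeasurable (hX 0)
  have hmean : ∫ ω, (f ∘ X 0) ω ∂P = ∫ p, f p ∂μ := by
    rw [← hlaw 0, integral_map (hX 0) hf.aestronglyMeasurable]
    rfl
  filter_upwards [ProbabilityTheory.strong_law_ae_real (fun i => f ∘ X i) hint
    (fun i j hij => (hindep hij).comp hf hf) hident] with ω hω
  rw [hmean] at hω
  simpa only [integral_empiricalMeasure, Function.comp_apply] using hω

end EmpiricalMeasure

theorem tendsto_of_isFrechetMedian_of_tendsto_firstMoment {M ι : Type*} [PseudoMetricSpace M]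
    [ProperSpace M] [MeasurableSpace M] [OpensMeasurableSpace M] {l : Filter ι}
    {ν : ι → Measure M} [∀ n, IsProbabilityMeasure (ν n)] {μ : Measure M}
    [IsProbabilityMeasure μ] {x₀ : M} (hν : ∀ n, Integrable (fun p => dist x₀ p) (ν n))
    (hμ : Integrable (fun p => dist x₀ p) μ) {D : Set M} (hD : Dense D) {m : M}
    (hconv : ∀ y ∈ insert m D, Tendsto (fun n => firstMoment (ν n) y) l (𝓝 (firstMoment μ y)))
    (hm : ∀ x ≠ m, firstMoment μ m < firstMoment μ x)
    {z : ι → M} (hz : ∀ n, IsFrechetMedian (ν n) (z n)) :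
    Tendsto z l (𝓝 m) := by
  set R := 2 * firstMoment μ m + 2
  have hbdd : ∀ᶠ n in l, dist (z n) m ≤ R := by
    filter_upwards [(hconv m (Set.mem_insert m D)).eventually
      (eventually_lt_nhds (lt_add_one _))] with n hn
    have hzm : firstMoment (ν n) (z n) ≤ firstMoment (ν n) m := hz n m
    linarith [dist_le_firstMoment_add_firstMoment (hν n) (z n) m]
  have hunif : TendstoUniformlyOn (fun n => firstMoment (ν n)) (firstMoment μ) l
      (closedBall m R) :=
    tendstoUniformlyOn_of_lipschitzWith_of_dense (fun n => lipschitzWith_firstMoment (hν n))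
      (lipschitzWith_firstMoment hμ) hD (fun y hy => hconv y (Set.mem_insert_of_mem m hy))
      (isCompact_closedBall m R)
  exact tendsto_of_tendstoUniformlyOn_of_forall_lt (lipschitzWith_firstMoment hμ).continuous hm
    hunif hbdd fun n => hz n m

theorem empirical_frechet_medians_converge_as_general
    {M : Type*} [MetricSpace M] [ProperSpace M]
    [MeasurableSpace M] [BorelSpace M]
    {Ω : Type*} [MeasurableSpace Ω] (P : Measure Ω)
    (X : ℕ → Ω → M) (hmeas : ∀ n, Measurable (X n))
    (hindep : ProbabilityTheory.iIndepFun X P)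
    (μ : Measure M) [IsProbabilityMeasure μ]
    (hlaw : ∀ n, P.map (X n) = μ)
    (x₀ : M) (hmom : Integrable (fun p => dist x₀ p) μ)
    (m : M) (hmed : ∀ y : M, (∫ p, dist m p ∂μ) ≤ ∫ p, dist y p ∂μ)
    (huniq : ∀ x : M, (∀ y : M, (∫ p, dist x p ∂μ) ≤ ∫ p, dist y p ∂μ) → x = m)
    (mn : ℕ → Ω → M)
    (hmn : ∀ n : ℕ, ∀ ω : Ω, ∀ y : M,
      (∫ p, dist (mn n ω) p
          ∂((n : ℝ≥0∞)⁻¹ • ∑ k ∈ Finset.range n, Measure.dirac (X k ω))) ≤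
        ∫ p, dist y p
          ∂((n : ℝ≥0∞)⁻¹ • ∑ k ∈ Finset.range n, Measure.dirac (X k ω))) :
    ∀ᵐ ω ∂P, Tendsto (fun n => mn n ω) atTop (nhds m) := by
  have hm : ∀ x ≠ m, firstMoment μ m < firstMoment μ x := fun x hx =>
    (hmed x).lt_of_ne fun h => hx (huniq x fun y => h ▸ hmed y)
  obtain ⟨D, hDc, hD⟩ := TopologicalSpace.exists_countable_dense M
  have hslln : ∀ᵐ ω ∂P, ∀ y ∈ insert m D, Tendsto
      (fun n => firstMoment (empiricalMeasure (X · ω) n) y) atTop (𝓝 (firstMoment μ y)) :=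
    (ae_ball_iff (hDc.insert m)).2 fun y _ =>
      ae_tendsto_integral_empiricalMeasure (fun n => (hmeas n).aemeasurable)
        (fun i j hij => hindep.indepFun hij) hlaw (continuous_const.dist continuous_id).measurable
        (integrable_dist_of_integrable_dist hmom y)
  filter_upwards [hslln] with ω hω
  have hprob (n : ℕ) : IsProbabilityMeasure (empiricalMeasure (X · ω) (n + 1)) :=
    isProbabilityMeasure_empiricalMeasure _ n.succ_ne_zero
  exact (tendsto_add_atTop_iff_nat 1).1 <| tendsto_of_isFrechetMedian_of_tendsto_firstMoment
    (fun n => integrable_empiricalMeasure (X · ω) n.succ_ne_zero _) hmom hD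
    (fun y hy => (tendsto_add_atTop_iff_nat 1).2 (hω y hy)) hm fun n => hmn (n + 1) ω

/-- Strong consistency of empirical Fréchet medians: if `(Xₙ)` are
i.i.d. with law `μ ∈ P₁(M)` on a proper separable metric space, `mₙ` is a Fréchet
median of the empirical measure `μₙ = (1/n) ∑_{k<n} δ_{X_k}`, and `μ` has a unique
Fréchet median `m`, then `mₙ → m` almost surely. -/
theorem empirical_frechet_medians_converge_as
    {M : Type*} [MetricSpace M] [ProperSpace M] [TopologicalSpace.SeparableSpace M]
    [MeasurableSpace M] [BorelSpace M]
    {Ω : Type*} [MeasurableSpace Ω] (P : Measure Ω) [IsProbabilityMeasure P]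
    (X : ℕ → Ω → M) (hmeas : ∀ n, Measurable (X n))
    (hindep : ProbabilityTheory.iIndepFun X P)
    (μ : Measure M) [IsProbabilityMeasure μ]
    (hlaw : ∀ n, P.map (X n) = μ)
    (x₀ : M) (hmom : Integrable (fun p => dist x₀ p) μ)
    (m : M) (hmed : ∀ y : M, (∫ p, dist m p ∂μ) ≤ ∫ p, dist y p ∂μ)
    (huniq : ∀ x : M, (∀ y : M, (∫ p, dist x p ∂μ) ≤ ∫ p, dist y p ∂μ) → x = m)
    (mn : ℕ → Ω → M)
    (hmn : ∀ n : ℕ, ∀ ω : Ω, ∀ y : M,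
      (∫ p, dist (mn n ω) p
          ∂((n : ℝ≥0∞)⁻¹ • ∑ k ∈ Finset.range n, Measure.dirac (X k ω))) ≤
        ∫ p, dist y p
          ∂((n : ℝ≥0∞)⁻¹ • ∑ k ∈ Finset.range n, Measure.dirac (X k ω))) :
    ∀ᵐ ω ∂P, Tendsto (fun n => mn n ω) atTop (nhds m) :=
  empirical_frechet_medians_converge_as_general P X hmeas hindep μ hlaw x₀ hmom m hmed huniq mn hmn
end

section
/- Let (M,d) be a proper metric space, μ ∈ P₁(M), and suppose μ(B̄(a,ρ)) = α > 1/2 for a closed ball B̄(a,ρ). Let x ∈ M with x ∉ B̄(a,ρ), and suppose there exists z ∈ M such that min over p ∈ B̄(a,ρ) of (d(x,p) − d(z,p)) > ((1−α)/α) d(x,z). Then x is not a Fréchet median of μ. -/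
open MeasureTheory Metric

/-! With `g p = d(x,p) − d(z,p)` we have `f_μ(x) − f_μ(z) = ∫ g dμ`. On the ball `g` exceeds
`((1−α)/α) d(x,z)`, and everywhere `g ≥ −d(x,z)` by the triangle inequality, so
`∫ g dμ > α · ((1−α)/α) d(x,z) − (1−α) d(x,z) = 0` and `z` beats `x`. -/

lemma integrable_dist_of_integrable_dist_s6 {M : Type*} [MetricSpace M] [MeasurableSpace M]
    [OpensMeasurableSpace M] {μ : Measure M} [IsFiniteMeasure μ] {x₀ : M}
    (hx₀ : Integrable (fun p => dist x₀ p) μ) (x : M) :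
    Integrable (fun p => dist x p) μ := by
  refine ((integrable_const (dist x x₀)).add hx₀).mono'
    (continuous_const.dist continuous_id).aestronglyMeasurable (ae_of_all _ fun p => ?_)
  rw [Real.norm_of_nonneg dist_nonneg]
  exact dist_triangle x x₀ p

lemma measureReal_mul_lt_setIntegral {X : Type*} [MeasurableSpace X] {μ : Measure X}
    {s : Set X} {f : X → ℝ} {c : ℝ} (hs : MeasurableSet s) (hμs₀ : μ s ≠ 0) (hμs : μ s ≠ ⊤)
    (hf : IntegrableOn f s μ) (hc : ∀ x ∈ s, c < f x) :
    c * μ.real s < ∫ x in s, f x ∂μ := by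
  have hgap : ∀ x ∈ s, 0 < f x - c := fun x hx => sub_pos.2 (hc x hx)
  have hsub : IntegrableOn (fun x => f x - c) s μ := hf.sub (integrableOn_const hμs)
  have hpos : 0 < ∫ x in s, (f x - c) ∂μ := by
    rw [setIntegral_pos_iff_support_of_nonneg_ae
      (ae_restrict_of_forall_mem hs fun x hx => (hgap x hx).le) hsub,
      Set.inter_eq_self_of_subset_right fun x hx => Function.mem_support.2 (hgap x hx).ne']
    exact pos_iff_ne_zero.2 hμs₀
  rwa [integral_sub hf (integrableOn_const hμs), setIntegral_const, smul_eq_mul, sub_pos,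
    mul_comm] at hpos

lemma lt_integral_of_lt_on_of_le_on_compl {X : Type*} [MeasurableSpace X] {μ : Measure X}
    [IsFiniteMeasure μ] {s : Set X} {f : X → ℝ} {c d : ℝ} (hf : Integrable f μ)
    (hs : MeasurableSet s) (hμs : μ s ≠ 0) (hc : ∀ x ∈ s, c < f x) (hd : ∀ x ∈ sᶜ, d ≤ f x) :
    c * μ.real s + d * μ.real sᶜ < ∫ x, f x ∂μ := by
  rw [← integral_add_compl hs hf]
  exact add_lt_add_of_lt_of_le
    (measureReal_mul_lt_setIntegral hs hμs (measure_ne_top μ s) hf.integrableOn hc)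
    (setIntegral_ge_of_const_le_real hs.compl (measure_ne_top μ _) hd hf.integrableOn)

theorem not_frechet_median_of_dominating_point_general
    {M : Type*} [MetricSpace M]
    [MeasurableSpace M] [BorelSpace M]
    (μ : Measure M) [IsProbabilityMeasure μ]
    (x₀ : M) (hmom : Integrable (fun p => dist x₀ p) μ)
    (a : M) (ρ : ℝ)
    (α : ℝ) (hα : 1 / 2 < α)
    (hmass : μ (closedBall a ρ) = ENNReal.ofReal α)
    (x : M)
    (z : M)
    (hz : ∀ p ∈ closedBall a ρ, ((1 - α) / α) * dist x z < dist x p - dist z p) :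
    ¬ (∀ y : M, (∫ p, dist x p ∂μ) ≤ ∫ p, dist y p ∂μ) := by
  intro hmin
  have hα₀ : 0 < α := by linarith
  have hix := integrable_dist_of_integrable_dist_s6 hmom x
  have hiz := integrable_dist_of_integrable_dist_s6 hmom z
  have hball : μ.real (closedBall a ρ) = α := by
    rw [measureReal_def, hmass, ENNReal.toReal_ofReal hα₀.le]
  have hgain := lt_integral_of_lt_on_of_le_on_compl (f := fun p => dist x p - dist z p)
    (d := -dist x z) (hix.sub hiz) measurableSet_closedBall (by simp [hmass, hα₀]) hz
    (fun p _ => by linarith [dist_triangle z x p, dist_comm x z])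
  rw [probReal_compl_eq_one_sub measurableSet_closedBall, hball, integral_sub hix hiz] at hgain
  have hcancel : (1 - α) / α * dist x z * α + -dist x z * (1 - α) = 0 := by
    field_simp; ring
  linarith [hmin z]

/-- If `μ(B̄(a,ρ)) = α > 1/2` and `x ∉ B̄(a,ρ)` admits a point `z` with
`min_{p ∈ B̄(a,ρ)} (d(x,p) − d(z,p)) > ((1−α)/α) d(x,z)`, then `x` is not a Fréchet
median of `μ`. -/
theorem not_frechet_median_of_dominating_point
    {M : Type*} [MetricSpace M] [ProperSpace M]
    [MeasurableSpace M] [BorelSpace M]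
    (μ : Measure M) [IsProbabilityMeasure μ]
    (x₀ : M) (hmom : Integrable (fun p => dist x₀ p) μ)
    (a : M) (ρ : ℝ) (hρ : 0 < ρ)
    (α : ℝ) (hα : 1 / 2 < α)
    (hmass : μ (closedBall a ρ) = ENNReal.ofReal α)
    (x : M) (hx : x ∉ closedBall a ρ)
    (z : M)
    (hz : ∀ p ∈ closedBall a ρ, ((1 - α) / α) * dist x z < dist x p - dist z p) :
    ¬ (∀ y : M, (∫ p, dist x p ∂μ) ≤ ∫ p, dist y p ∂μ) :=
  not_frechet_median_of_dominating_point_general μ x₀ hmom a ρ α hα hmass x z hz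
end

section
/- In the Euclidean plane ℝ², let a = (0,0), ρ > 0, and let t, u ≥ 0 with u < ρ + t. Set x = (ρ+t, 0) and z = (u, 0). Then the minimum over p in the closed disc B̄(a,ρ) of h(p) = |x − p| − |z − p| equals t − ρ + u if u ≤ (ρ+t)ρ/(ρ+2t), and equals (ρ+t−u)·√(1 − ρ²/(u(ρ+t))) otherwise. -/
/-!
Write `s = ρ + t`, `q = |x − p|`, `r = |z − p|`; the case split is `2us ≤ ρ(s + u)` or not.
Stewart's theorem for the collinear points `0`, `z`, `x` gives, on the disc,
`u q² − s r² = (s − u)(us − |p|²) ≥ (s − u)(us − ρ²)`.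
In the first case this, together with `q ≥ s − ρ`, bounds `q − r` below by the value
`(s − ρ) − (ρ − u)` at `(ρ, 0)`. In the second case it alone gives
`q − r ≥ (s − u)√(1 − ρ²/(us))` by completing a square in `r`; equality holds on the circle at
first coordinate `ρ²(s + u)/(2us)`, where `q` and `r` are `s` and `u` times the square root.
-/

open Metric RealInnerProductSpace

lemma sub_le_sub_of_mul_sq_sub_sq_le {s u q r q₀ r₀ : ℝ} (hu : 0 ≤ u) (hus : u < s)
    (hq₀ : 0 ≤ q₀) (hq : q₀ ≤ q)
    (h : s * (r ^ 2 - r₀ ^ 2) ≤ u * (q ^ 2 - q₀ ^ 2)) (h₀ : u * q₀ ≤ s * r₀) :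
    q₀ - r₀ ≤ q - r := by
  rcases le_or_gt r r₀ with hrr | hrr
  · linarith
  by_contra! hlt
  have hsum : s * (r + r₀) ≤ u * (q + q₀) := by
    refine le_of_mul_le_mul_right ?_ (sub_pos.2 hrr)
    calc s * (r + r₀) * (r - r₀) = s * (r ^ 2 - r₀ ^ 2) := by ring
      _ ≤ u * (q + q₀) * (q - q₀) := by linarith
      _ ≤ u * (q + q₀) * (r - r₀) :=
        mul_le_mul_of_nonneg_left (by linarith) (mul_nonneg hu (by linarith))
  nlinarith

lemma le_sub_of_mul_sq_le {s u q r m : ℝ} (hu : 0 < u) (hus : u < s)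
    (hq : 0 ≤ q) (hr : 0 ≤ r) (hm : 0 ≤ m)
    (h : u * s * m ^ 2 ≤ (s - u) * (u * q ^ 2 - s * r ^ 2)) :
    m ≤ q - r := by
  have key : ((s - u) * r - u * m) ^ 2 ≤ (s - u) * u * (q ^ 2 - (r + m) ^ 2) := by
    linear_combination h
  have hsq : (r + m) ^ 2 ≤ q ^ 2 :=
    sub_nonneg.1 <| nonneg_of_mul_nonneg_right ((sq_nonneg _).trans key)
      (mul_pos (sub_pos.2 hus) hu)
  linarith [(pow_le_pow_iff_left₀ (by positivity) hq two_ne_zero).1 hsq]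

variable {E : Type*} [NormedAddCommGroup E] [InnerProductSpace ℝ E]

lemma norm_smul_sub_sq {v : E} (hv : ‖v‖ = 1) (s : ℝ) (p : E) :
    ‖s • v - p‖ ^ 2 = s ^ 2 - 2 * s * ⟪v, p⟫ + ‖p‖ ^ 2 := by
  rw [norm_sub_sq_real, norm_smul, real_inner_smul_left, hv, Real.norm_eq_abs, mul_one, sq_abs]
  ring

/-- Stewart's theorem for the points `0`, `u • v`, `s • v` on a line and an arbitrary point `p`. -/
lemma mul_norm_smul_sub_sq_sub_mul_norm_smul_sub_sq {v : E} (hv : ‖v‖ = 1) (s u : ℝ) (p : E) :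
    u * ‖s • v - p‖ ^ 2 - s * ‖u • v - p‖ ^ 2 = (s - u) * (u * s - ‖p‖ ^ 2) := by
  rw [norm_smul_sub_sq hv, norm_smul_sub_sq hv]
  ring

lemma exists_norm_eq_inner_eq {v w : E} (hv : ‖v‖ = 1) (hw : ‖w‖ = 1) (hvw : ⟪v, w⟫ = 0)
    {ρ a : ℝ} (hρ : 0 ≤ ρ) (ha : |a| ≤ ρ) : ∃ p : E, ‖p‖ = ρ ∧ ⟪v, p⟫ = a := by
  have hb : 0 ≤ ρ ^ 2 - a ^ 2 := sub_nonneg.2 (sq_le_sq' (abs_le.1 ha).1 (abs_le.1 ha).2)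
  refine ⟨a • v + √(ρ ^ 2 - a ^ 2) • w, ?_, ?_⟩
  · rw [← sq_eq_sq₀ (norm_nonneg _) hρ, norm_add_sq_real, norm_smul, norm_smul,
      real_inner_smul_left, real_inner_smul_right, hv, hw, hvw, Real.norm_eq_abs, Real.norm_eq_abs,
      abs_of_nonneg (Real.sqrt_nonneg _), mul_pow, mul_pow, sq_abs, Real.sq_sqrt hb]
    ring
  · rw [inner_add_right, real_inner_smul_right, real_inner_smul_right, real_inner_self_eq_norm_sq,
      hv, hvw]
    ring

lemma dist_smul_smul_of_norm_eq_one {v : E} (hv : ‖v‖ = 1) (s u : ℝ) :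
    dist (s • v) (u • v) = |s - u| := by
  rw [dist_eq_norm, ← sub_smul, norm_smul, hv, mul_one, Real.norm_eq_abs]

theorem isLeast_dist_sub_dist_of_two_mul_mul_le {v : E} (hv : ‖v‖ = 1) {ρ s u : ℝ}
    (hu : 0 ≤ u) (hus : u < s) (hρs : ρ ≤ s) (hcase : 2 * u * s ≤ ρ * (s + u)) :
    IsLeast ((fun p => dist (s • v) p - dist (u • v) p) '' closedBall 0 ρ)
      (s - ρ - (ρ - u)) := by
  have huρ : u ≤ ρ := by nlinarith
  refine ⟨⟨ρ • v, ?_, ?_⟩, ?_⟩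
  · simpa [norm_smul, hv] using abs_le.2 ⟨by linarith, le_rfl⟩
  · simp only [dist_smul_smul_of_norm_eq_one hv, abs_of_nonneg (sub_nonneg.2 hρs),
      abs_of_nonpos (sub_nonpos.2 huρ)]
    ring
  rintro _ ⟨p, hp, rfl⟩
  rw [mem_closedBall_zero_iff] at hp
  have hp2 : ‖p‖ ^ 2 ≤ ρ ^ 2 := pow_le_pow_left₀ (norm_nonneg p) hp 2
  have hstewart := mul_norm_smul_sub_sq_sub_mul_norm_smul_sub_sq hv s u p
  refine sub_le_sub_of_mul_sq_sub_sq_le hu hus (sub_nonneg.2 hρs) ?_ ?_ (by linarith)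
  · calc s - ρ ≤ ‖s • v‖ - ‖p‖ := by
          rw [norm_smul, hv, mul_one, Real.norm_eq_abs, abs_of_nonneg (by linarith)]
          linarith
      _ ≤ dist (s • v) p := dist_eq_norm (s • v) p ▸ norm_sub_norm_le _ _
  · rw [dist_eq_norm, dist_eq_norm]
    nlinarith [mul_le_mul_of_nonneg_left hp2 (sub_nonneg.2 hus.le)]

theorem isLeast_dist_sub_dist_of_le_two_mul_mul {v w : E} (hv : ‖v‖ = 1) (hw : ‖w‖ = 1)
    (hvw : ⟪v, w⟫ = 0) {ρ s u : ℝ} (hρ : 0 ≤ ρ) (hu : 0 < u) (hus : u < s)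
    (hcase : ρ * (s + u) ≤ 2 * u * s) :
    IsLeast ((fun p => dist (s • v) p - dist (u • v) p) '' closedBall 0 ρ)
      ((s - u) * √(1 - ρ ^ 2 / (u * s))) := by
  have hs : 0 < s := hu.trans hus
  have hus_pos : 0 < u * s := mul_pos hu hs
  have hρ2 : ρ ^ 2 ≤ u * s := by nlinarith [sq_nonneg (s - u)]
  set c := 1 - ρ ^ 2 / (u * s) with hc_def
  have hc : 0 ≤ c := by rw [hc_def, sub_nonneg, div_le_one hus_pos]; exact hρ2
  have husc : u * s * c = u * s - ρ ^ 2 := by rw [hc_def]; field_simp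
  constructor
  · set a := ρ ^ 2 * (s + u) / (2 * u * s) with ha_def
    have ha : |a| ≤ ρ := by
      rw [abs_of_nonneg (by positivity), div_le_iff₀ (by positivity)]
      nlinarith
    obtain ⟨p, hp, hvp⟩ := exists_norm_eq_inner_eq hv hw hvw hρ ha
    have hdist : ∀ k, 0 ≤ k → (k - s) * (k - u) = 0 → dist (k • v) p = k * √c := by
      intro k hk hks
      -- `‖k • v - p‖ ^ 2 - k ^ 2 * c = -ρ ^ 2 * (k - s) * (k - u) / (u * s)`
      rw [dist_eq_norm, ← sq_eq_sq₀ (norm_nonneg _) (by positivity), norm_smul_sub_sq hv, hvp, hp,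
        mul_pow, Real.sq_sqrt hc, hc_def, ha_def]
      field_simp
      linear_combination ρ ^ 2 * hks
    refine ⟨p, mem_closedBall_zero_iff.2 hp.le, ?_⟩
    simp only [hdist s hs.le (by ring), hdist u hu.le (by ring)]
    ring
  rintro _ ⟨p, hp, rfl⟩
  rw [mem_closedBall_zero_iff] at hp
  have hp2 : ‖p‖ ^ 2 ≤ ρ ^ 2 := pow_le_pow_left₀ (norm_nonneg p) hp 2
  refine le_sub_of_mul_sq_le hu hus dist_nonneg dist_nonneg (by positivity) ?_
  rw [dist_eq_norm, dist_eq_norm, mul_norm_smul_sub_sq_sub_mul_norm_smul_sub_sq hv, mul_pow,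
    Real.sq_sqrt hc]
  calc u * s * ((s - u) ^ 2 * c) = (s - u) * ((s - u) * (u * s - ρ ^ 2)) := by
        rw [← husc]; ring
    _ ≤ (s - u) * ((s - u) * (u * s - ‖p‖ ^ 2)) := by gcongr

lemma EuclideanSpace.equiv_symm_vecCons_zero (c : ℝ) :
    (WithLp.equiv 2 (Fin 2 → ℝ)).symm ![c, 0] = c • EuclideanSpace.single 0 1 := by
  ext i
  fin_cases i <;> simp

/-- Minimum of `h(p) = |x − p| − |z − p|` over the closed disc of
radius `ρ` about the origin in the Euclidean plane, where `x = (ρ+t, 0)` and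
`z = (u, 0)` with `t, u ≥ 0` and `u < ρ + t`. -/
theorem min_h_euclidean_plane (ρ t u : ℝ) (hρ : 0 < ρ) (ht : 0 ≤ t) (hu : 0 ≤ u)
    (hlt : u < ρ + t) :
    IsLeast
      ((fun p : EuclideanSpace ℝ (Fin 2) =>
          dist ((WithLp.equiv 2 (Fin 2 → ℝ)).symm ![ρ + t, 0]) p -
            dist ((WithLp.equiv 2 (Fin 2 → ℝ)).symm ![u, 0]) p) ''
        closedBall (0 : EuclideanSpace ℝ (Fin 2)) ρ)
      (if u ≤ (ρ + t) * ρ / (ρ + 2 * t) then t - ρ + u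
       else (ρ + t - u) * Real.sqrt (1 - ρ ^ 2 / (u * (ρ + t)))) := by
  have hONB := EuclideanSpace.orthonormal_single (𝕜 := ℝ) (ι := Fin 2)
  have hρt : 0 < ρ + 2 * t := by linarith
  simp only [EuclideanSpace.equiv_symm_vecCons_zero]
  split_ifs with hcase
  · rw [le_div_iff₀ hρt] at hcase
    convert isLeast_dist_sub_dist_of_two_mul_mul_le (hONB.1 0) (ρ := ρ) hu hlt (by linarith)
      (by linarith) using 1
    ring
  · rw [not_le, div_lt_iff₀ hρt] at hcase
    exact isLeast_dist_sub_dist_of_le_two_mul_mul (hONB.1 0) (hONB.1 1)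
      (hONB.2 zero_ne_one) hρ.le (by nlinarith) hlt (by linarith)
end

section
/- On the unit sphere S² with its geodesic distance d, let a be a fixed point, ρ > 0, t, u ≥ 0 with u < ρ + t and ρ + t + u < π. Let x and z be points on a common geodesic through a with d(a,x) = ρ+t and d(a,z) = u, on the same side. Then the minimum over p in the closed geodesic ball B̄(a,ρ) of d(x,p) − d(z,p) equals t − ρ + u if cot u ≥ 2 cot ρ − cot(ρ+t), and equals arccos(cos(ρ+t−u) + sin²ρ · sin²(ρ+t−u)/(2 sin u sin(ρ+t))) otherwise. -/
open Metric

/-- The geodesic (great-circle) distance on the unit sphere of `ℝ³`. -/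
noncomputable def sphereDist (p q : EuclideanSpace ℝ (Fin 3)) : ℝ :=
  Real.arccos (inner ℝ p q : ℝ)

/-!
Put `a` at the north pole and `x`, `z` on one meridian at polar angles `α = ρ + t` and `u`.
Since `sin α • z - sin u • x = sin (α - u) • a`, every `p` of the cap `B̄(a, ρ)` satisfies
`sin u * cos d(x,p) ≤ sin α * cos d(z,p) - cos ρ * sin (α - u)`. Writing `β = d(z,p)`, the bound
`m ≤ d(x,p) - β` therefore follows from the one-variable inequality
`sin α * cos β - cos ρ * sin (α - u) ≤ sin u * cos (m + β)` on the range `β ≤ ρ + u` allowed by the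
triangle inequality.

Under the cotangent condition, `m = t + u - ρ` is attained at the point of the cap's boundary on
the meridian. For `β ≤ ρ - u` the triangle inequality `α - u ≤ d(x,p) + β` already gives the
bound; for `β = ρ - u + 2δ ≥ ρ - u` the difference of the two sides is `2 sin δ * g δ` for a
sinusoid `g` which is nonnegative at `δ = 0` (the cotangent condition) and at `δ = u`, hence on
`[0, u]`.

Otherwise `Q = cos m` satisfies `(sin α - sin u * Q)² + sin² u * (1 - Q²) = cos² ρ * sin² (α - u)`,
so the one-variable inequality is Cauchy–Schwarz for all `β`, with equality at a point of the
boundary circle of the cap, which is where the minimum is attained.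
-/

open Real InnerProductGeometry RealInnerProductSpace

lemma sin_add_mul_sin (θ δ u : ℝ) :
    sin (θ + δ) * sin u = sin θ * sin (u - δ) + sin (θ + u) * sin δ := by
  simp only [sin_add, sin_sub]; ring

lemma cos_sub_cos_add_two_mul (x δ : ℝ) : cos x - cos (x + 2 * δ) = 2 * sin (x + δ) * sin δ := by
  rw [cos_sub_cos, show (x + (x + 2 * δ)) / 2 = x + δ by ring,
    show (x - (x + 2 * δ)) / 2 = -δ by ring, sin_neg]
  ring

lemma sin_mul_sin_le_iff_cot_le {ρ t u : ℝ} (hρ : 0 < ρ) (ht : 0 ≤ t) (hu : 0 < u)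
    (hsum : ρ + t + u < π) :
    sin u * sin t ≤ sin (ρ + t) * sin (ρ - u) ↔ 2 * cot ρ - cot (ρ + t) ≤ cot u := by
  have hsρ : 0 < sin ρ := sin_pos_of_pos_of_lt_pi hρ (by linarith)
  have hsu : 0 < sin u := sin_pos_of_pos_of_lt_pi hu (by linarith)
  have hsα : 0 < sin (ρ + t) := sin_pos_of_pos_of_lt_pi (by linarith) (by linarith)
  have key : sin (ρ + t) * sin (ρ - u) - sin u * sin t
      = sin u * sin ρ * sin (ρ + t) * (cot u - (2 * cot ρ - cot (ρ + t))) := by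
    have ht : sin t = sin ((ρ + t) - ρ) := by ring_nf
    rw [cot_eq_cos_div_sin, cot_eq_cos_div_sin, cot_eq_cos_div_sin, sin_sub ρ u, ht,
      sin_sub (ρ + t) ρ]
    field_simp
    ring
  rw [← sub_nonneg, key, ← sub_nonneg (b := 2 * cot ρ - cot (ρ + t))]
  exact mul_nonneg_iff_of_pos_left (by positivity)

lemma le_of_sin_mul_sin_le {ρ t u : ℝ} (hρ : 0 < ρ) (ht : 0 ≤ t) (hsum : ρ + t + u < π)
    (h : sin u * sin t ≤ sin (ρ + t) * sin (ρ - u)) : u ≤ ρ := by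
  by_contra! hρu
  have hsu : 0 < sin u := sin_pos_of_pos_of_lt_pi (by linarith) (by linarith)
  have hsα : 0 < sin (ρ + t) := sin_pos_of_pos_of_lt_pi (by linarith) (by linarith)
  have hst : 0 ≤ sin t := sin_nonneg_of_nonneg_of_le_pi ht (by linarith)
  have : sin (ρ - u) < 0 := sin_neg_of_neg_of_neg_pi_lt (by linarith) (by linarith)
  nlinarith [mul_nonneg hsu.le hst]

lemma sin_mul_sin_sub_sin_mul_sin_nonneg {ρ t u δ : ℝ} (ht : 0 ≤ t) (hu : 0 < u) (huρ : u ≤ ρ)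
    (hsum : ρ + t + u < π) (h : sin u * sin t ≤ sin (ρ + t) * sin (ρ - u)) (hδ₀ : 0 ≤ δ)
    (hδu : δ ≤ u) : 0 ≤ sin (ρ + t) * sin (ρ - u + δ) - sin u * sin (t + δ) := by
  have hend : sin (ρ + t) * sin ρ - sin u * sin (t + u) = sin (ρ + t + u) * sin (ρ - u) := by
    have e₁ := two_mul_sin_mul_sin (ρ + t) ρ
    have e₂ := two_mul_sin_mul_sin (t + u) u
    have e₃ := two_mul_sin_mul_sin (ρ + t + u) (ρ - u)
    ring_nf at e₁ e₂ e₃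
    linear_combination (e₁ - e₂ - e₃) / 2
  -- interpolation of the sinusoid between its values at `δ = 0` and `δ = u`
  have hinterp : sin u * (sin (ρ + t) * sin (ρ - u + δ) - sin u * sin (t + δ))
      = (sin (ρ + t) * sin (ρ - u) - sin u * sin t) * sin (u - δ)
        + sin (ρ + t + u) * sin (ρ - u) * sin δ := by
    have h₁ := sin_add_mul_sin (ρ - u) δ u
    have h₂ := sin_add_mul_sin t δ u
    rw [show ρ - u + u = ρ by ring] at h₁
    linear_combination sin (ρ + t) * h₁ - sin u * h₂ + sin δ * hend
  have hsu : 0 < sin u := sin_pos_of_pos_of_lt_pi hu (by linarith)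
  have : 0 ≤ sin u * (sin (ρ + t) * sin (ρ - u + δ) - sin u * sin (t + δ)) := by
    rw [hinterp]
    have := sin_nonneg_of_nonneg_of_le_pi (x := u - δ) (by linarith) (by linarith)
    have := sin_nonneg_of_nonneg_of_le_pi (x := ρ + t + u) (by linarith) hsum.le
    have := sin_nonneg_of_nonneg_of_le_pi (x := ρ - u) (by linarith) (by linarith)
    have := sin_nonneg_of_nonneg_of_le_pi (x := δ) hδ₀ (by linarith)
    have : 0 ≤ sin (ρ + t) * sin (ρ - u) - sin u * sin t := by linarith
    positivity
  exact nonneg_of_mul_nonneg_right this hsu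

lemma sin_mul_cos_sub_le_of_sin_mul_sin_le {ρ t u β : ℝ} (ht : 0 ≤ t) (hu : 0 < u) (huρ : u ≤ ρ)
    (hsum : ρ + t + u < π) (h : sin u * sin t ≤ sin (ρ + t) * sin (ρ - u))
    (hβ₀ : ρ - u ≤ β) (hβ₁ : β ≤ ρ + u) :
    sin (ρ + t) * cos β - cos ρ * sin (ρ + t - u) ≤ sin u * cos (t + u - ρ + β) := by
  obtain ⟨δ, rfl, hδ₀, hδu⟩ : ∃ δ, β = ρ - u + 2 * δ ∧ 0 ≤ δ ∧ δ ≤ u :=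
    ⟨(β - (ρ - u)) / 2, by ring, by linarith, by linarith⟩
  have hcorner : cos ρ * sin (ρ + t - u) = sin (ρ + t) * cos (ρ - u) - sin u * cos t := by
    have ht : cos t = cos ((ρ + t) - ρ) := by ring_nf
    rw [ht, sin_sub, cos_sub, cos_sub]
    ring
  have hfactor : sin u * cos (t + 2 * δ)
      - (sin (ρ + t) * cos (ρ - u + 2 * δ) - cos ρ * sin (ρ + t - u))
      = 2 * sin δ * (sin (ρ + t) * sin (ρ - u + δ) - sin u * sin (t + δ)) := by
    linear_combination hcorner + sin (ρ + t) * cos_sub_cos_add_two_mul (ρ - u) δ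
      - sin u * cos_sub_cos_add_two_mul t δ
  rw [show t + u - ρ + (ρ - u + 2 * δ) = t + 2 * δ by ring]
  have hsδ : 0 ≤ sin δ := sin_nonneg_of_nonneg_of_le_pi hδ₀ (by linarith)
  linarith [mul_nonneg hsδ (sin_mul_sin_sub_sin_mul_sin_nonneg ht hu huρ hsum h hδ₀ hδu)]

lemma sin_mul_cos_sub_le_sin_mul_cos_arccos_add {α u C Q : ℝ} (hC : 0 ≤ C)
    (hQ : 2 * sin α * sin u * Q = sin α ^ 2 + sin u ^ 2 - C ^ 2) (hQ₀ : -1 ≤ Q) (hQ₁ : Q ≤ 1)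
    (β : ℝ) : sin α * cos β - C ≤ sin u * cos (arccos Q + β) := by
  rw [cos_add, cos_arccos hQ₀ hQ₁, sin_arccos]
  set a := sin α - sin u * Q
  set b := sin u * √(1 - Q ^ 2)
  have hab : a ^ 2 + b ^ 2 = C ^ 2 := by
    have hs : √(1 - Q ^ 2) ^ 2 = 1 - Q ^ 2 := sq_sqrt (by nlinarith)
    simp only [a, b]
    linear_combination sin u ^ 2 * hs - hQ
  have hcs : (a * cos β + b * sin β) ^ 2 ≤ C ^ 2 := by
    nlinarith [sq_nonneg (a * sin β - b * cos β), sin_sq_add_cos_sq β]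
  have := le_of_sq_le_sq hcs hC
  linarith

lemma cos_sub_eq_of_sin_mul_cos_eq {α u C Q γ β : ℝ} (hsu : 0 < sin u) (hsα : 0 ≤ sin α)
    (hQ : 2 * sin α * sin u * Q = sin α ^ 2 + sin u ^ 2 - C ^ 2)
    (hγ₀ : 0 ≤ γ) (hγπ : γ ≤ π) (hβ₀ : 0 ≤ β) (hβπ : β ≤ π)
    (hγ : sin u * cos γ = sin α * cos β - C) (hβ : C * cos β = sin α - sin u * Q) :
    cos (γ - β) = Q := by
  have hsin : sin u * sin γ = sin α * sin β := by
    have hsq : (sin u * sin γ) ^ 2 = (sin α * sin β) ^ 2 := by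
      linear_combination sin u ^ 2 * sin_sq_add_cos_sq γ - sin α ^ 2 * sin_sq_add_cos_sq β
        - (sin u * cos γ + sin α * cos β - C) * hγ + 2 * sin α * hβ - hQ
    have := sin_nonneg_of_nonneg_of_le_pi hγ₀ hγπ
    have := sin_nonneg_of_nonneg_of_le_pi hβ₀ hβπ
    exact (sq_eq_sq₀ (by positivity) (by positivity)).1 hsq
  refine mul_left_cancel₀ hsu.ne' ?_
  rw [cos_sub]
  linear_combination cos β * hγ + sin β * hsin + sin α * sin_sq_add_cos_sq β - hβ

lemma two_mul_sin_mul_sin_mul_cos_sub (α u : ℝ) :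
    2 * sin α * sin u * cos (α - u) = sin α ^ 2 + sin u ^ 2 - sin (α - u) ^ 2 := by
  rw [cos_sub, sin_sub]
  linear_combination sin α ^ 2 * sin_sq_add_cos_sq u + sin u ^ 2 * sin_sq_add_cos_sq α

lemma two_mul_sin_mul_sin_mul_sub_cos_sub {α u ρ Q : ℝ}
    (hQ : 2 * sin α * sin u * Q = sin α ^ 2 + sin u ^ 2 - (cos ρ * sin (α - u)) ^ 2) :
    2 * sin α * sin u * (Q - cos (α - u)) = (sin ρ * sin (α - u)) ^ 2 := by
  linear_combination hQ - two_mul_sin_mul_sin_mul_cos_sub α u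
    - sin (α - u) ^ 2 * sin_sq_add_cos_sq ρ

lemma two_mul_sin_mul_sin_mul_sub_cos_add {α u ρ Q : ℝ}
    (hQ : 2 * sin α * sin u * Q = sin α ^ 2 + sin u ^ 2 - (cos ρ * sin (α - u)) ^ 2) :
    2 * sin α * sin u * (Q - cos (α + 2 * ρ + u))
      = (sin α * sin (ρ + u) + sin u * sin (α + ρ)) ^ 2 := by
  have h₁ := two_mul_sin_mul_sin_mul_sub_cos_sub hQ
  have h₂ : cos (α - u) - cos (α + 2 * ρ + u) = 2 * sin (α + ρ) * sin (ρ + u) := by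
    rw [cos_sub_cos, show (α - u + (α + 2 * ρ + u)) / 2 = α + ρ by ring,
      show (α - u - (α + 2 * ρ + u)) / 2 = -(ρ + u) by ring, sin_neg]
    ring
  have h₃ : sin α * sin (ρ + u) - sin u * sin (α + ρ) = sin ρ * sin (α - u) := by
    simp only [sin_add, sin_sub]; ring
  linear_combination h₁ + 2 * sin α * sin u * h₂
    - (sin α * sin (ρ + u) - sin u * sin (α + ρ) + sin ρ * sin (α - u)) * h₃

lemma arccos_add_add_le_pi {α u ρ Q : ℝ} (hu : 0 < u) (huα : u < α) (hαu : α + u < π)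
    (hρ : ρ ≤ π / 2)
    (hQ : 2 * sin α * sin u * Q = sin α ^ 2 + sin u ^ 2 - (cos ρ * sin (α - u)) ^ 2) :
    arccos Q + ρ + u ≤ π := by
  have hsα : 0 < sin α := sin_pos_of_pos_of_lt_pi (by linarith) (by linarith)
  have hsu : 0 < sin u := sin_pos_of_pos_of_lt_pi hu (by linarith)
  have hpos := mul_pos (mul_pos two_pos hsα) hsu
  rcases le_or_gt (α + ρ) π with h | h
  · have hQ' : cos (α - u) ≤ Q := by
      nlinarith [two_mul_sin_mul_sin_mul_sub_cos_sub hQ, sq_nonneg (sin ρ * sin (α - u))]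
    have := arccos_le_arccos hQ'
    rw [arccos_cos (by linarith) (by linarith)] at this
    linarith
  · have hQ' : cos (2 * π - (α + 2 * ρ + u)) ≤ Q := by
      rw [cos_two_pi_sub]
      nlinarith [two_mul_sin_mul_sin_mul_sub_cos_add hQ,
        sq_nonneg (sin α * sin (ρ + u) + sin u * sin (α + ρ))]
    have := arccos_le_arccos hQ'
    rw [arccos_cos (by linarith) (by linarith)] at this
    linarith

section Sphere

variable {V : Type*} [NormedAddCommGroup V] [InnerProductSpace ℝ V]

noncomputable def greatCircle (a e : V) (θ : ℝ) : V := cos θ • a + sin θ • e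

def sphericalCap (a : V) (ρ : ℝ) : Set V := {p | ‖p‖ = 1 ∧ angle a p ≤ ρ}

lemma greatCircle_zero (a e : V) : greatCircle a e 0 = a := by simp [greatCircle]

lemma inner_greatCircle_left (a e p : V) (θ : ℝ) :
    ⟪greatCircle a e θ, p⟫ = cos θ * ⟪a, p⟫ + sin θ * ⟪e, p⟫ := by
  simp only [greatCircle, inner_add_left, real_inner_smul_left]

lemma sin_mul_inner_greatCircle_sub (a e p : V) (α u : ℝ) :
    sin α * ⟪greatCircle a e u, p⟫ - sin u * ⟪greatCircle a e α, p⟫ = sin (α - u) * ⟪a, p⟫ := by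
  rw [inner_greatCircle_left, inner_greatCircle_left, sin_sub]; ring

lemma inner_greatCircle_greatCircle {a e : V} (ha : ‖a‖ = 1) (he : ‖e‖ = 1) (hae : ⟪a, e⟫ = 0)
    (θ φ : ℝ) : ⟪greatCircle a e θ, greatCircle a e φ⟫ = cos (θ - φ) := by
  simp only [greatCircle, inner_add_left, inner_add_right, real_inner_smul_left,
    real_inner_smul_right, real_inner_self_eq_norm_sq, ha, he, hae, real_inner_comm a e, cos_sub]
  ring

lemma norm_greatCircle {a e : V} (ha : ‖a‖ = 1) (he : ‖e‖ = 1) (hae : ⟪a, e⟫ = 0) (θ : ℝ) :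
    ‖greatCircle a e θ‖ = 1 := by
  have h := inner_greatCircle_greatCircle ha he hae θ θ
  rw [sub_self, cos_zero, real_inner_self_eq_norm_sq] at h
  exact (pow_eq_one_iff_of_nonneg (norm_nonneg _) two_ne_zero).1 h

lemma angle_greatCircle {a e : V} (ha : ‖a‖ = 1) (he : ‖e‖ = 1) (hae : ⟪a, e⟫ = 0) {θ φ : ℝ}
    (h₀ : φ ≤ θ) (h₁ : θ - φ ≤ π) :
    angle (greatCircle a e θ) (greatCircle a e φ) = θ - φ := by
  rw [angle, inner_greatCircle_greatCircle ha he hae, norm_greatCircle ha he hae,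
    norm_greatCircle ha he hae, mul_one, div_one, arccos_cos (by linarith) h₁]

lemma angle_greatCircle_self {a e : V} (ha : ‖a‖ = 1) (he : ‖e‖ = 1) (hae : ⟪a, e⟫ = 0) {θ : ℝ}
    (h₀ : 0 ≤ θ) (h₁ : θ ≤ π) : angle (greatCircle a e θ) a = θ := by
  simpa [greatCircle_zero] using angle_greatCircle ha he hae (θ := θ) (φ := 0) h₀ (by simpa)

lemma cos_le_inner_of_mem_sphericalCap {a p : V} {ρ : ℝ} (ha : ‖a‖ = 1) (hρ : ρ ≤ π)
    (hp : p ∈ sphericalCap a ρ) : cos ρ ≤ ⟪a, p⟫ := by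
  rw [inner_eq_cos_angle_of_norm_eq_one ha hp.1]
  exact cos_le_cos_of_nonneg_of_le_pi (angle_nonneg a p) hρ hp.2

lemma sin_mul_cos_angle_le {a e p : V} (ha : ‖a‖ = 1) (he : ‖e‖ = 1) (hae : ⟪a, e⟫ = 0)
    {α u ρ : ℝ} (huα : u ≤ α) (hαu : α - u ≤ π) (hρ : ρ ≤ π) (hp : p ∈ sphericalCap a ρ) :
    sin u * cos (angle (greatCircle a e α) p)
      ≤ sin α * cos (angle (greatCircle a e u) p) - cos ρ * sin (α - u) := by
  rw [← inner_eq_cos_angle_of_norm_eq_one (norm_greatCircle ha he hae α) hp.1,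
    ← inner_eq_cos_angle_of_norm_eq_one (norm_greatCircle ha he hae u) hp.1]
  have := mul_le_mul_of_nonneg_left (cos_le_inner_of_mem_sphericalCap ha hρ hp)
    (sin_nonneg_of_nonneg_of_le_pi (sub_nonneg.2 huα) hαu)
  linarith [sin_mul_inner_greatCircle_sub a e p α u]

lemma angle_greatCircle_le {a e p : V} (ha : ‖a‖ = 1) (he : ‖e‖ = 1) (hae : ⟪a, e⟫ = 0)
    {u ρ : ℝ} (hu : 0 ≤ u) (huπ : u ≤ π) (hp : p ∈ sphericalCap a ρ) :
    angle (greatCircle a e u) p ≤ u + ρ := by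
  linarith [angle_le_angle_add_angle (greatCircle a e u) a p, hp.2,
    angle_greatCircle_self ha he hae hu huπ]

lemma sub_le_angle_add_angle {a e : V} (ha : ‖a‖ = 1) (he : ‖e‖ = 1) (hae : ⟪a, e⟫ = 0)
    {α u : ℝ} (huα : u ≤ α) (hαu : α - u ≤ π) (p : V) :
    α - u ≤ angle (greatCircle a e α) p + angle (greatCircle a e u) p := by
  rw [← angle_greatCircle ha he hae huα hαu, angle_comm (greatCircle a e u) p]
  exact angle_le_angle_add_angle _ _ _

lemma exists_norm_eq_one_inner_eq {a e f : V} (ha : ‖a‖ = 1) (he : ‖e‖ = 1) (hf : ‖f‖ = 1)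
    (hae : ⟪a, e⟫ = 0) (haf : ⟪a, f⟫ = 0) (hef : ⟪e, f⟫ = 0) {c X : ℝ} (h : c ^ 2 + X ^ 2 ≤ 1) :
    ∃ p : V, ‖p‖ = 1 ∧ ⟪a, p⟫ = c ∧ ⟪e, p⟫ = X := by
  have hs : √(1 - c ^ 2 - X ^ 2) ^ 2 = 1 - c ^ 2 - X ^ 2 := sq_sqrt (by linarith)
  refine ⟨c • a + X • e + √(1 - c ^ 2 - X ^ 2) • f, ?_, ?_, ?_⟩
  · have hp : ‖c • a + X • e + √(1 - c ^ 2 - X ^ 2) • f‖ ^ 2 = 1 := by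
      rw [← real_inner_self_eq_norm_sq]
      simp only [inner_add_left, inner_add_right, real_inner_smul_left, real_inner_smul_right]
      simp only [real_inner_self_eq_norm_sq, ha, he, hf, hae, haf, hef, real_inner_comm a e,
        real_inner_comm a f, real_inner_comm e f]
      linear_combination hs
    exact (pow_eq_one_iff_of_nonneg (norm_nonneg _) two_ne_zero).1 hp
  · simp [inner_add_right, real_inner_smul_right, ha, hae, haf]
  · have hea : ⟪e, a⟫ = 0 := by rw [real_inner_comm]; exact hae
    simp [inner_add_right, real_inner_smul_right, he, hef, hea]

theorem le_angle_sub_angle_of_sin_mul_sin_le {a e p : V} (ha : ‖a‖ = 1) (he : ‖e‖ = 1)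
    (hae : ⟪a, e⟫ = 0) {ρ t u : ℝ} (hρ : 0 < ρ) (ht : 0 ≤ t) (hu : 0 ≤ u) (hsum : ρ + t + u < π)
    (h : sin u * sin t ≤ sin (ρ + t) * sin (ρ - u)) (hp : p ∈ sphericalCap a ρ) :
    t - ρ + u ≤ angle (greatCircle a e (ρ + t)) p - angle (greatCircle a e u) p := by
  have huρ := le_of_sin_mul_sin_le hρ ht hsum h
  have htri := sub_le_angle_add_angle ha he hae (α := ρ + t) (u := u) (by linarith) (by linarith) p
  rcases le_or_gt (angle (greatCircle a e u) p) (ρ - u) with hβ | hβ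
  · linarith
  have hβ' := angle_greatCircle_le ha he hae hu (by linarith) hp
  have hu' : 0 < u := by linarith
  have hcos : cos (angle (greatCircle a e (ρ + t)) p)
      ≤ cos (t + u - ρ + angle (greatCircle a e u) p) :=
    le_of_mul_le_mul_left
      ((sin_mul_cos_angle_le ha he hae (by linarith) (by linarith) (by linarith) hp).trans
        (sin_mul_cos_sub_le_of_sin_mul_sin_le ht hu' huρ hsum h hβ.le (by linarith)))
      (sin_pos_of_pos_of_lt_pi hu' (by linarith))
  have := (strictAntiOn_cos.le_iff_ge ⟨angle_nonneg _ _, angle_le_pi _ _⟩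
    ⟨by linarith, by linarith⟩).1 hcos
  linarith

theorem arccos_le_angle_sub_angle {a e p : V} (ha : ‖a‖ = 1) (he : ‖e‖ = 1) (hae : ⟪a, e⟫ = 0)
    {α u ρ Q : ℝ} (hu : 0 < u) (huα : u < α) (hαu : α + u < π) (hρ₀ : 0 ≤ ρ) (hρ : ρ ≤ π / 2)
    (hQ : 2 * sin α * sin u * Q = sin α ^ 2 + sin u ^ 2 - (cos ρ * sin (α - u)) ^ 2)
    (hQ₀ : -1 ≤ Q) (hQ₁ : Q ≤ 1) (hp : p ∈ sphericalCap a ρ) :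
    arccos Q ≤ angle (greatCircle a e α) p - angle (greatCircle a e u) p := by
  have hβ := angle_greatCircle_le ha he hae hu.le (by linarith) hp
  have hC : 0 ≤ cos ρ * sin (α - u) :=
    mul_nonneg (cos_nonneg_of_mem_Icc ⟨by linarith, hρ⟩)
      (sin_nonneg_of_nonneg_of_le_pi (by linarith) (by linarith))
  have hcos : cos (angle (greatCircle a e α) p) ≤ cos (arccos Q + angle (greatCircle a e u) p) :=
    le_of_mul_le_mul_left
      ((sin_mul_cos_angle_le ha he hae huα.le (by linarith) (by linarith) hp).trans
        (sin_mul_cos_sub_le_sin_mul_cos_arccos_add hC hQ hQ₀ hQ₁ _))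
      (sin_pos_of_pos_of_lt_pi hu (by linarith))
  have := (strictAntiOn_cos.le_iff_ge ⟨angle_nonneg _ _, angle_le_pi _ _⟩
    ⟨add_nonneg (arccos_nonneg Q) (angle_nonneg _ _),
      by linarith [arccos_add_add_le_pi hu huα hαu hρ hQ]⟩).1 hcos
  linarith

theorem isLeast_angle_sub_angle_of_sin_mul_sin_le {a e : V} (ha : ‖a‖ = 1) (he : ‖e‖ = 1)
    (hae : ⟪a, e⟫ = 0) {ρ t u : ℝ} (hρ : 0 < ρ) (ht : 0 ≤ t) (hu : 0 ≤ u) (hsum : ρ + t + u < π)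
    (h : sin u * sin t ≤ sin (ρ + t) * sin (ρ - u)) :
    IsLeast ((fun p ↦ angle (greatCircle a e (ρ + t)) p - angle (greatCircle a e u) p) ''
      sphericalCap a ρ) (t - ρ + u) := by
  have huρ := le_of_sin_mul_sin_le hρ ht hsum h
  refine ⟨⟨greatCircle a e ρ, ⟨norm_greatCircle ha he hae ρ, ?_⟩, ?_⟩, ?_⟩
  · rw [angle_comm, angle_greatCircle_self ha he hae hρ.le (by linarith)]
  · simp only
    rw [angle_greatCircle ha he hae (by linarith) (by linarith), angle_comm,
      angle_greatCircle ha he hae huρ (by linarith)]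
    ring
  · rintro _ ⟨p, hp, rfl⟩
    exact le_angle_sub_angle_of_sin_mul_sin_le ha he hae hρ ht hu hsum h hp

lemma exists_mem_sphericalCap_cos_angle_sub_angle_eq {a e f : V} (ha : ‖a‖ = 1) (he : ‖e‖ = 1)
    (hf : ‖f‖ = 1) (hae : ⟪a, e⟫ = 0) (haf : ⟪a, f⟫ = 0) (hef : ⟪e, f⟫ = 0) {α u ρ Q : ℝ}
    (hu : 0 < u) (huα : u < α) (hαu : α + u < π) (hρ : 0 < ρ) (hρπ : ρ < π)
    (hE : sin ρ * sin (α + u) < 2 * cos ρ * sin u * sin α)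
    (hQ : 2 * sin α * sin u * Q = sin α ^ 2 + sin u ^ 2 - (cos ρ * sin (α - u)) ^ 2) :
    ∃ p ∈ sphericalCap a ρ,
      cos (angle (greatCircle a e α) p - angle (greatCircle a e u) p) = Q := by
  have hsα : 0 < sin α := sin_pos_of_pos_of_lt_pi (by linarith) (by linarith)
  have hsu : 0 < sin u := sin_pos_of_pos_of_lt_pi hu (by linarith)
  have hsρ : 0 < sin ρ := sin_pos_of_pos_of_lt_pi hρ hρπ
  have hS : 0 < sin (α + u) := sin_pos_of_pos_of_lt_pi (by linarith) hαu
  have hcρ : 0 < cos ρ := by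
    by_contra! h
    nlinarith [mul_pos hsρ hS, mul_pos hsu hsα]
  -- `X` makes `cos ρ * sin (α - u) * cos d(z,p) = sin α - sin u * Q`: equality in Cauchy–Schwarz
  set X := sin ρ ^ 2 * sin (α + u) / (2 * sin α * sin u * cos ρ) with hXdef
  have hX : 2 * sin α * sin u * cos ρ * X = sin ρ ^ 2 * sin (α + u) := by
    rw [hXdef]; field_simp
  have hX₀ : 0 ≤ X := by positivity
  have hX₁ : X < sin ρ := by
    rw [hXdef, div_lt_iff₀ (by positivity)]
    nlinarith
  obtain ⟨p, hp, hpa, hpe⟩ := exists_norm_eq_one_inner_eq ha he hf hae haf hef (c := cos ρ) (X := X)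
    (by nlinarith [sin_sq_add_cos_sq ρ])
  have hpcap : p ∈ sphericalCap a ρ :=
    ⟨hp, by rw [angle, hpa, ha, hp, mul_one, div_one, arccos_cos hρ.le hρπ.le]⟩
  have hcos : ∀ θ, cos (angle (greatCircle a e θ) p) = cos θ * cos ρ + sin θ * X := fun θ ↦ by
    rw [← inner_eq_cos_angle_of_norm_eq_one (norm_greatCircle ha he hae θ) hp,
      inner_greatCircle_left, hpa, hpe]
  refine ⟨p, hpcap, cos_sub_eq_of_sin_mul_cos_eq hsu hsα.le hQ (angle_nonneg _ _)
    (angle_le_pi _ _) (angle_nonneg _ _) (angle_le_pi _ _) ?_ ?_⟩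
  · rw [hcos, hcos, sin_sub]; ring
  · rw [hcos]
    have e₁ : sin (α + u) * sin (α - u) = sin α ^ 2 - sin u ^ 2 := by
      rw [sin_add, sin_sub]
      linear_combination sin α ^ 2 * sin_sq_add_cos_sq u - sin u ^ 2 * sin_sq_add_cos_sq α
    have e₂ := two_mul_sin_mul_cos α u
    refine mul_left_cancel₀ (mul_pos two_pos hsα).ne' ?_
    linear_combination sin (α - u) * hX + hQ + cos ρ ^ 2 * sin (α - u) * e₂ + e₁
      + sin (α + u) * sin (α - u) * sin_sq_add_cos_sq ρ

theorem isLeast_angle_sub_angle_of_sin_mul_sin_lt {a e f : V} (ha : ‖a‖ = 1) (he : ‖e‖ = 1)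
    (hf : ‖f‖ = 1) (hae : ⟪a, e⟫ = 0) (haf : ⟪a, f⟫ = 0) (hef : ⟪e, f⟫ = 0) {ρ t u : ℝ}
    (hρ : 0 < ρ) (ht : 0 ≤ t) (hu : 0 < u) (hlt : u < ρ + t) (hsum : ρ + t + u < π)
    (h : sin (ρ + t) * sin (ρ - u) < sin u * sin t) :
    IsLeast ((fun p ↦ angle (greatCircle a e (ρ + t)) p - angle (greatCircle a e u) p) ''
      sphericalCap a ρ)
      (arccos (cos (ρ + t - u) + sin ρ ^ 2 * sin (ρ + t - u) ^ 2 / (2 * sin u * sin (ρ + t)))) := by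
  set Q := cos (ρ + t - u) + sin ρ ^ 2 * sin (ρ + t - u) ^ 2 / (2 * sin u * sin (ρ + t)) with hQdef
  have hsα : 0 < sin (ρ + t) := sin_pos_of_pos_of_lt_pi (by linarith) (by linarith)
  have hsu : 0 < sin u := sin_pos_of_pos_of_lt_pi hu (by linarith)
  have hQ : 2 * sin (ρ + t) * sin u * Q
      = sin (ρ + t) ^ 2 + sin u ^ 2 - (cos ρ * sin (ρ + t - u)) ^ 2 := by
    rw [hQdef]
    field_simp
    linear_combination two_mul_sin_mul_sin_mul_cos_sub (ρ + t) u
      + sin (ρ + t - u) ^ 2 * sin_sq_add_cos_sq ρ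
  have hE : sin ρ * sin (ρ + t + u) < 2 * cos ρ * sin u * sin (ρ + t) := by
    have e : sin ρ * sin (ρ + t + u) - 2 * cos ρ * sin u * sin (ρ + t)
        = sin (ρ + t) * sin (ρ - u) - sin u * sin t := by
      have ht : sin t = sin ((ρ + t) - ρ) := by ring_nf
      rw [ht, sin_sub (ρ + t) ρ, sin_add (ρ + t) u, sin_sub ρ u]; ring
    linarith
  have hρ' : ρ < π / 2 := by
    by_contra! hρ'
    have := cos_nonpos_of_pi_div_two_le_of_le hρ' (by linarith)
    have := sin_pos_of_pos_of_lt_pi (x := ρ + t + u) (by linarith) hsum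
    have := sin_pos_of_pos_of_lt_pi hρ (by linarith)
    nlinarith [mul_pos hsu hsα]
  obtain ⟨p, hp, hpQ⟩ := exists_mem_sphericalCap_cos_angle_sub_angle_eq ha he hf hae haf hef hu hlt
    hsum hρ (by linarith) hE hQ
  have hlower : ∀ q ∈ sphericalCap a ρ,
      arccos Q ≤ angle (greatCircle a e (ρ + t)) q - angle (greatCircle a e u) q :=
    fun q hq ↦ arccos_le_angle_sub_angle ha he hae hu hlt hsum hρ.le hρ'.le hQ
      (hpQ ▸ neg_one_le_cos _) (hpQ ▸ cos_le_one _) hq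
  refine ⟨⟨p, hp, ?_⟩, ?_⟩
  · have := hlower p hp
    rw [← hpQ, arccos_cos (by linarith [arccos_nonneg Q])
      (by linarith [angle_le_pi (greatCircle a e (ρ + t)) p, angle_nonneg (greatCircle a e u) p])]
  · rintro _ ⟨q, hq, rfl⟩
    exact hlower q hq

end Sphere

lemma sphereDist_eq_angle {p q : EuclideanSpace ℝ (Fin 3)} (hp : ‖p‖ = 1) (hq : ‖q‖ = 1) :
    sphereDist p q = angle p q := by
  rw [sphereDist, angle, hp, hq, mul_one, div_one]

lemma image_sphereDist_sub_sphereDist {x z a : EuclideanSpace ℝ (Fin 3)} (hx : ‖x‖ = 1)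
    (hz : ‖z‖ = 1) (ha : ‖a‖ = 1) (ρ : ℝ) :
    (fun p ↦ sphereDist x p - sphereDist z p) '' {p | ‖p‖ = 1 ∧ sphereDist a p ≤ ρ}
      = (fun p ↦ angle x p - angle z p) '' sphericalCap a ρ := by
  have hcap : {p | ‖p‖ = 1 ∧ sphereDist a p ≤ ρ} = sphericalCap a ρ := by
    ext p
    exact and_congr_right fun hp ↦ by rw [sphereDist_eq_angle ha hp]
  rw [hcap]
  exact Set.image_congr fun p hp ↦ by
    rw [sphereDist_eq_angle hx hp.1, sphereDist_eq_angle hz hp.1]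

/-- The disjunct `u = 0` stands for `cot u = +∞` (Mathlib's `cot 0` is `0`). -/
theorem min_h_sphere (ρ t u : ℝ) (hρ : 0 < ρ) (ht : 0 ≤ t) (hu : 0 ≤ u)
    (hlt : u < ρ + t) (hsum : ρ + t + u < Real.pi) :
    IsLeast
      ((fun p : EuclideanSpace ℝ (Fin 3) =>
          sphereDist ((WithLp.equiv 2 (Fin 3 → ℝ)).symm
              ![Real.sin (ρ + t), 0, Real.cos (ρ + t)]) p -
            sphereDist ((WithLp.equiv 2 (Fin 3 → ℝ)).symm ![Real.sin u, 0, Real.cos u]) p) ''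
        {p : EuclideanSpace ℝ (Fin 3) | ‖p‖ = 1 ∧
          sphereDist ((WithLp.equiv 2 (Fin 3 → ℝ)).symm ![0, 0, 1]) p ≤ ρ})
      (if u = 0 ∨ Real.cot u ≥ 2 * Real.cot ρ - Real.cot (ρ + t) then t - ρ + u
       else Real.arccos (Real.cos (ρ + t - u) +
          Real.sin ρ ^ 2 * Real.sin (ρ + t - u) ^ 2 /
            (2 * Real.sin u * Real.sin (ρ + t)))) := by
  have ha : ‖(EuclideanSpace.single 2 1 : EuclideanSpace ℝ (Fin 3))‖ = 1 := by simp
  have he : ‖(EuclideanSpace.single 0 1 : EuclideanSpace ℝ (Fin 3))‖ = 1 := by simp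
  have hae : ⟪(EuclideanSpace.single 2 1 : EuclideanSpace ℝ (Fin 3)), EuclideanSpace.single 0 1⟫
      = 0 := by simp [EuclideanSpace.inner_single_left]
  have hmeridian : ∀ θ, (WithLp.equiv 2 (Fin 3 → ℝ)).symm ![sin θ, 0, cos θ]
      = greatCircle (EuclideanSpace.single 2 1) (EuclideanSpace.single 0 1) θ := by
    intro θ; ext i; fin_cases i <;> simp [greatCircle]
  have hpole := hmeridian 0
  rw [sin_zero, cos_zero, greatCircle_zero] at hpole
  rw [hpole, hmeridian, hmeridian, image_sphereDist_sub_sphereDist (norm_greatCircle ha he hae _)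
    (norm_greatCircle ha he hae _) ha]
  split_ifs with hcase
  · refine isLeast_angle_sub_angle_of_sin_mul_sin_le ha he hae hρ ht hu hsum ?_
    rcases hu.eq_or_lt with rfl | hu₀
    · simpa using mul_nonneg (sin_nonneg_of_nonneg_of_le_pi (by linarith) hsum.le)
        (sin_nonneg_of_nonneg_of_le_pi hρ.le (by linarith))
    · exact (sin_mul_sin_le_iff_cot_le hρ ht hu₀ hsum).2 (hcase.resolve_left hu₀.ne')
  · obtain ⟨hne, hcot⟩ := not_or.1 hcase
    have hu₀ : 0 < u := lt_of_le_of_ne hu (Ne.symm hne)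
    refine isLeast_angle_sub_angle_of_sin_mul_sin_lt (f := EuclideanSpace.single 1 1) ha he
      (by simp) hae (by simp [EuclideanSpace.inner_single_left])
      (by simp [EuclideanSpace.inner_single_left]) hρ ht hu₀ hlt hsum ?_
    exact lt_of_not_ge fun h ↦ hcot ((sin_mul_sin_le_iff_cot_le hρ ht hu₀ hsum).1 h)
end

section
/- Fix ρ > 0 and 1/2 < α < 1, and suppose 2αρ/(2α−1) < π. Define F(t) = cot((2α−1)t) − cot(t) − 2 cot(ρ) for t ∈ (0, ρ/(2α−1)]. Then there exists a unique t₁ ∈ (0, ρ/(2α−1)) such that {t ∈ (0, ρ/(2α−1)] : F(t) ≥ 0} = (0, t₁]. -/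
/-!
With `L = 2α - 1`, multiplying `F(t)` by `sin ρ · sin (Lt) · sin t > 0` turns `F(t) ≥ 0` into
`cos (ρ + (1 - L)t) ≤ cos ρ · cos ((1 + L)t)`, i.e. into `g(t) ≤ 0` for
`g(t) = arccos (cos ρ · cos ((1 + L)t)) - (ρ + (1 - L)t)`. Now `g(0) = 0`, `g'(0) = L - 1 < 0`,
and `g(ρ/L) > 0` because `F(ρ/L) = -(cot ρ + cot (ρ/L)) < 0`. Moreover
`g'(t) = (1 + L) φ(sin ((1 + L)t)) - (1 - L)` with `φ` increasing, so `g` is convex while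
`(1 + L)t ≤ π/2` and concave afterwards. As `g` ends positive, concavity forbids it to dip below
zero again once it has risen, so `{g ≤ 0}` is an interval `(0, t₁]`.
-/

open Real Set Topology

theorem HasDerivAt.exists_mem_Ioo_lt {f : ℝ → ℝ} {f' x b : ℝ} (hf : HasDerivAt f f' x)
    (hf' : f' < 0) (hxb : x < b) : ∃ z ∈ Ioo x b, f z < f x := by
  have hslope : ∀ᶠ z in 𝓝[>] x, slope f x z < 0 :=
    hf.hasDerivWithinAt.limsup_slope_le' (lt_irrefl x) hf'
  obtain ⟨z, hz, hzmem⟩ := (hslope.and (Ioo_mem_nhdsGT hxb)).exists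
  refine ⟨z, hzmem, ?_⟩
  rw [slope_def_field, div_neg_iff] at hz
  rcases hz with ⟨-, hz⟩ | ⟨hz, -⟩
  · linarith [hzmem.1]
  · linarith

theorem ConvexOn.nonpos_of_concaveOn {f : ℝ → ℝ} {a m b s t : ℝ}
    (hconv : ConvexOn ℝ (Icc a m) f) (hconc : ConcaveOn ℝ (Icc m b) f) (ha : f a ≤ 0)
    (hb : 0 < f b) (has : a ≤ s) (hst : s ≤ t) (htb : t ≤ b) (ht : f t ≤ 0) : f s ≤ 0 := by
  have hconv_le {u v : ℝ} (hau : a ≤ u) (huv : u ≤ v) (hvm : v ≤ m) (hv : f v ≤ 0) :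
      f u ≤ 0 :=
    (hconv.le_on_segment ⟨le_rfl, hau.trans (huv.trans hvm)⟩ ⟨hau.trans huv, hvm⟩
      (Icc_subset_segment ⟨hau, huv⟩)).trans (max_le ha hv)
  rcases le_or_gt t m with htm | hmt
  · exact hconv_le has hst htm ht
  have htb' : t < b := htb.lt_of_ne (by rintro rfl; linarith)
  have hmax : f (max s m) ≤ 0 := by
    by_contra! hpos
    have := hconc.ge_on_segment ⟨le_max_right s m, (max_le hst hmt.le).trans htb⟩
      ⟨hmt.le.trans htb, le_rfl⟩ (Icc_subset_segment ⟨max_le hst hmt.le, htb⟩)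
    linarith [lt_min hpos hb]
  rcases le_or_gt m s with hms | hsm
  · rwa [max_eq_left hms] at hmax
  · rw [max_eq_right hsm.le] at hmax
    exact hconv_le has hsm.le le_rfl hmax

theorem exists_unique_Ioc_eq_of_nonpos {f : ℝ → ℝ} {a b : ℝ} (hf : ContinuousOn f (Icc a b))
    (hb : 0 < f b) (hneg : ∃ t ∈ Ioo a b, f t ≤ 0)
    (hdown : ∀ s t, a < s → s ≤ t → t ≤ b → f t ≤ 0 → f s ≤ 0) :
    ∃! t₁, t₁ ∈ Ioo a b ∧ {t ∈ Ioc a b | f t ≤ 0} = Ioc a t₁ := by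
  obtain ⟨t₀, ht₀, hft₀⟩ := hneg
  set C := Icc a b ∩ f ⁻¹' Iic 0
  have hC : IsClosed C := hf.preimage_isClosed_of_isClosed isClosed_Icc isClosed_Iic
  have hCbdd : BddAbove C := ⟨b, fun t ht => ht.1.2⟩
  have ht₀C : t₀ ∈ C := ⟨Ioo_subset_Icc_self ht₀, hft₀⟩
  obtain ⟨⟨-, ht₁b⟩, hft₁⟩ := hC.csSup_mem ⟨t₀, ht₀C⟩ hCbdd
  have hat₁ : a < sSup C := ht₀.1.trans_le (le_csSup hCbdd ht₀C)
  have ht₁b' : sSup C < b :=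
    ht₁b.lt_of_ne (by rintro h; rw [h] at hft₁; exact hb.not_ge hft₁)
  have hset : {t ∈ Ioc a b | f t ≤ 0} = Ioc a (sSup C) := by
    ext t
    refine ⟨fun ⟨ht, hft⟩ => ⟨ht.1, le_csSup hCbdd ⟨Ioc_subset_Icc_self ht, hft⟩⟩,
      fun ht => ⟨⟨ht.1, ht.2.trans ht₁b⟩, hdown t _ ht.1 ht.2 ht₁b hft₁⟩⟩
  refine ⟨sSup C, ⟨⟨hat₁, ht₁b'⟩, hset⟩, fun y ⟨hy, hyset⟩ => ?_⟩
  exact ((Ioc_eq_Ioc_iff (Or.inl hy.1)).1 (hyset.symm.trans hset)).2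

theorem Real.arccos_le_iff_cos_le {x y : ℝ} (hx₁ : -1 ≤ x) (hx₂ : x ≤ 1) (hy₀ : 0 ≤ y)
    (hy₁ : y ≤ π) : arccos x ≤ y ↔ cos y ≤ x := by
  conv_rhs => rw [← cos_arccos hx₁ hx₂]
  exact (strictAntiOn_cos.le_iff_ge ⟨hy₀, hy₁⟩ ⟨arccos_nonneg x, arccos_le_pi x⟩).symm

theorem Real.cot_add_cot_pos {x y : ℝ} (hx : 0 < x) (hy : 0 < y) (hxy : x + y < π) :
    0 < cot x + cot y := by
  have hsx : 0 < sin x := sin_pos_of_pos_of_lt_pi hx (by linarith)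
  have hsy : 0 < sin y := sin_pos_of_pos_of_lt_pi hy (by linarith)
  have hsxy : 0 < sin (x + y) := sin_pos_of_pos_of_lt_pi (by linarith) hxy
  have h : cot x + cot y = sin (x + y) / (sin x * sin y) := by
    rw [cot_eq_cos_div_sin, cot_eq_cos_div_sin, sin_add]
    field_simp
    ring
  rw [h]
  positivity

theorem Real.sin_mul_sin_mul_sin_mul_cot_sub_cot_sub_two_cot {ρ x y : ℝ} (hρ : sin ρ ≠ 0)
    (hx : sin x ≠ 0) (hy : sin y ≠ 0) :
    sin ρ * sin x * sin y * (cot x - cot y - 2 * cot ρ) =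
      cos ρ * cos (x + y) - cos (ρ + y - x) := by
  rw [cot_eq_cos_div_sin, cot_eq_cos_div_sin, cot_eq_cos_div_sin, add_sub_assoc, cos_add,
    cos_add, cos_sub, sin_sub]
  field_simp
  ring

theorem Real.abs_mul_cos_lt_one {k : ℝ} (hk : |k| < 1) (u : ℝ) : |k * cos u| < 1 := by
  rw [abs_mul]
  exact (mul_le_of_le_one_right (abs_nonneg k) (abs_cos_le_one u)).trans_lt hk

theorem Real.hasDerivAt_arccos_mul_cos {k : ℝ} (hk : |k| < 1) (u : ℝ) :
    HasDerivAt (fun u => arccos (k * cos u))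
      (k * sin u / √(1 - k ^ 2 + k ^ 2 * sin u ^ 2)) u := by
  have h := abs_lt.1 (abs_mul_cos_lt_one hk u)
  refine ((hasDerivAt_arccos h.1.ne' h.2.ne).comp u
    ((hasDerivAt_cos u).const_mul k)).congr_deriv ?_
  rw [show 1 - (k * cos u) ^ 2 = 1 - k ^ 2 + k ^ 2 * sin u ^ 2 by
    linear_combination -k ^ 2 * sin_sq_add_cos_sq u]
  ring

theorem monotoneOn_mul_div_sqrt {k : ℝ} (hk₀ : 0 ≤ k) (hk₁ : k < 1) :
    MonotoneOn (fun y => k * y / √(1 - k ^ 2 + k ^ 2 * y ^ 2)) (Ici 0) := by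
  intro y hy z hz hyz
  have hD {x : ℝ} : 0 < 1 - k ^ 2 + k ^ 2 * x ^ 2 := by nlinarith [sq_nonneg (k * x)]
  have hyz2 : y ^ 2 ≤ z ^ 2 := pow_le_pow_left₀ hy hyz 2
  have key : y * √(1 - k ^ 2 + k ^ 2 * z ^ 2) ≤ z * √(1 - k ^ 2 + k ^ 2 * y ^ 2) :=
    calc y * √(1 - k ^ 2 + k ^ 2 * z ^ 2) = √(y ^ 2 * (1 - k ^ 2 + k ^ 2 * z ^ 2)) := by
          rw [sqrt_mul (sq_nonneg y), sqrt_sq hy]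
      _ ≤ √(z ^ 2 * (1 - k ^ 2 + k ^ 2 * y ^ 2)) :=
          sqrt_le_sqrt <| by
            nlinarith [mul_le_mul_of_nonneg_left hyz2 (by nlinarith : 0 ≤ 1 - k ^ 2)]
      _ = z * √(1 - k ^ 2 + k ^ 2 * y ^ 2) := by
          rw [sqrt_mul (sq_nonneg z), sqrt_sq (le_trans hy hyz)]
  dsimp only
  rw [div_le_div_iff₀ (sqrt_pos.2 hD) (sqrt_pos.2 hD), mul_assoc, mul_assoc]
  exact mul_le_mul_of_nonneg_left key hk₀

noncomputable def arccosGap (ρ L t : ℝ) : ℝ :=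
  arccos (cos ρ * cos ((1 + L) * t)) - (ρ + (1 - L) * t)

section arccosGap

variable {ρ L : ℝ}

theorem arccosGap_zero (hρ₀ : 0 ≤ ρ) (hρ₁ : ρ ≤ π) : arccosGap ρ L 0 = 0 := by
  simp [arccosGap, arccos_cos hρ₀ hρ₁]

theorem continuous_arccosGap : Continuous (arccosGap ρ L) := by
  unfold arccosGap
  fun_prop

theorem hasDerivAt_arccosGap (hρ : |cos ρ| < 1) (t : ℝ) :
    HasDerivAt (arccosGap ρ L) ((1 + L) * (cos ρ * sin ((1 + L) * t) /
      √(1 - cos ρ ^ 2 + cos ρ ^ 2 * sin ((1 + L) * t) ^ 2)) - (1 - L)) t := by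
  have hscale : HasDerivAt (fun t => (1 + L) * t) (1 + L) t := by
    simpa using (hasDerivAt_id t).const_mul (1 + L)
  have hline : HasDerivAt (fun t => ρ + (1 - L) * t) (1 - L) t := by
    simpa using ((hasDerivAt_id t).const_mul (1 - L)).const_add ρ
  rw [mul_comm (1 + L)]
  exact ((hasDerivAt_arccos_mul_cos hρ ((1 + L) * t)).comp t hscale).sub hline

theorem convexOn_arccosGap (hk₀ : 0 ≤ cos ρ) (hk₁ : cos ρ < 1) (hL : 0 < 1 + L) :
    ConvexOn ℝ (Icc 0 (π / 2 / (1 + L))) (arccosGap ρ L) := by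
  have hk : |cos ρ| < 1 := abs_lt.2 ⟨by linarith, hk₁⟩
  refine MonotoneOn.convexOn_of_deriv (convex_Icc _ _) continuous_arccosGap.continuousOn
    (fun t _ => (hasDerivAt_arccosGap hk t).differentiableAt.differentiableWithinAt) ?_
  rw [interior_Icc]
  intro s hs t ht hst
  rw [(hasDerivAt_arccosGap hk s).deriv, (hasDerivAt_arccosGap hk t).deriv]
  have hs' := (lt_div_iff₀' hL).1 hs.2
  have ht' := (lt_div_iff₀' hL).1 ht.2
  have h0s : 0 ≤ (1 + L) * s := by nlinarith [hs.1]
  have hst' : (1 + L) * s ≤ (1 + L) * t := by gcongr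
  gcongr ?_ - _
  refine mul_le_mul_of_nonneg_left (monotoneOn_mul_div_sqrt hk₀ hk₁ ?_ ?_ ?_) hL.le
  · exact sin_nonneg_of_nonneg_of_le_pi h0s (by linarith [pi_pos])
  · exact sin_nonneg_of_nonneg_of_le_pi (h0s.trans hst') (by linarith [pi_pos])
  · exact sin_le_sin_of_le_of_le_pi_div_two (by linarith [pi_pos]) ht'.le hst'

theorem concaveOn_arccosGap (hk₀ : 0 ≤ cos ρ) (hk₁ : cos ρ < 1) (hL : 0 < 1 + L) :
    ConcaveOn ℝ (Icc (π / 2 / (1 + L)) (π / (1 + L))) (arccosGap ρ L) := by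
  have hk : |cos ρ| < 1 := abs_lt.2 ⟨by linarith, hk₁⟩
  refine AntitoneOn.concaveOn_of_deriv (convex_Icc _ _) continuous_arccosGap.continuousOn
    (fun t _ => (hasDerivAt_arccosGap hk t).differentiableAt.differentiableWithinAt) ?_
  rw [interior_Icc]
  intro s hs t ht hst
  rw [(hasDerivAt_arccosGap hk s).deriv, (hasDerivAt_arccosGap hk t).deriv]
  have hs' := (div_lt_iff₀' hL).1 hs.1
  have ht' := (lt_div_iff₀' hL).1 ht.2
  have hst' : (1 + L) * s ≤ (1 + L) * t := by gcongr
  gcongr ?_ - _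
  refine mul_le_mul_of_nonneg_left (monotoneOn_mul_div_sqrt hk₀ hk₁ ?_ ?_ ?_) hL.le
  · exact sin_nonneg_of_nonneg_of_le_pi (by linarith [pi_pos]) ht'.le
  · exact sin_nonneg_of_nonneg_of_le_pi (by linarith [pi_pos]) (by linarith)
  · rw [← sin_pi_sub ((1 + L) * t), ← sin_pi_sub ((1 + L) * s)]
    exact sin_le_sin_of_le_of_le_pi_div_two (by linarith) (by linarith) (by linarith)

theorem nonneg_cot_sub_iff_arccosGap_nonpos {t : ℝ} (hρ : 0 < ρ) (hL₀ : 0 < L) (hL₁ : L ≤ 1)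
    (ht : 0 < t) (hρt : ρ + t < π) :
    0 ≤ cot (L * t) - cot t - 2 * cot ρ ↔ arccosGap ρ L t ≤ 0 := by
  have hLt : L * t ≤ t := mul_le_of_le_one_left ht.le hL₁
  have hsρ : 0 < sin ρ := sin_pos_of_pos_of_lt_pi hρ (by linarith)
  have hsLt : 0 < sin (L * t) := sin_pos_of_pos_of_lt_pi (by positivity) (by linarith)
  have hst : 0 < sin t := sin_pos_of_pos_of_lt_pi ht (by linarith)
  have hprod := sin_mul_sin_mul_sin_mul_cot_sub_cot_sub_two_cot hsρ.ne' hsLt.ne' hst.ne'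
  have hcos := abs_le.1 ((abs_mul _ _).trans_le
    (mul_le_one₀ (abs_cos_le_one ρ) (abs_nonneg _) (abs_cos_le_one ((1 + L) * t))))
  rw [arccosGap, sub_nonpos, arccos_le_iff_cos_le hcos.1 hcos.2 (by nlinarith) (by nlinarith),
    show (1 + L) * t = L * t + t by ring, show ρ + (1 - L) * t = ρ + t - L * t by ring,
    ← sub_nonneg (b := cos (ρ + t - L * t)), ← hprod]
  exact (mul_nonneg_iff_of_pos_left (by positivity)).symm

end arccosGap

/-- For `ρ > 0`, `1/2 < α < 1` with `2αρ/(2α−1) < π`, the function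
`F(t) = cot((2α−1)t) − cot t − 2 cot ρ` on `(0, ρ/(2α−1)]` is nonnegative exactly on an
interval `(0, t₁]` for a unique `t₁ ∈ (0, ρ/(2α−1))`. -/
theorem cot_threshold_unique (ρ α : ℝ) (hρ : 0 < ρ) (hα1 : 1 / 2 < α) (hα2 : α < 1)
    (hassump : 2 * α * ρ / (2 * α - 1) < Real.pi) :
    ∃! t₁ : ℝ, t₁ ∈ Set.Ioo 0 (ρ / (2 * α - 1)) ∧
      {t ∈ Set.Ioc 0 (ρ / (2 * α - 1)) |
          0 ≤ Real.cot ((2 * α - 1) * t) - Real.cot t - 2 * Real.cot ρ} =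
        Set.Ioc 0 t₁ := by
  have hL₀ : 0 < 2 * α - 1 := by linarith
  have hsum : (1 + (2 * α - 1)) * (ρ / (2 * α - 1)) < π := by
    convert hassump using 1
    ring
  set L := 2 * α - 1
  set b := ρ / L
  have hL₁ : L < 1 := by linarith
  have hb₀ : 0 < b := div_pos hρ hL₀
  have hLb : L * b = ρ := mul_div_cancel₀ ρ hL₀.ne'
  have hρb : ρ < b := by nlinarith
  have hbπ : b ≤ π / (1 + L) := (le_div_iff₀' (by linarith)).2 hsum.le
  have hcos₀ : 0 ≤ cos ρ := cos_nonneg_of_mem_Icc ⟨by linarith, by nlinarith⟩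
  have hcos₁ : cos ρ < 1 := by
    simpa using cos_lt_cos_of_nonneg_of_le_pi le_rfl (by nlinarith) hρ
  have hg₀ : arccosGap ρ L 0 = 0 := arccosGap_zero hρ.le (by nlinarith)
  have hkey : ∀ t ∈ Ioc 0 b,
      0 ≤ cot (L * t) - cot t - 2 * cot ρ ↔ arccosGap ρ L t ≤ 0 := fun t ht =>
    nonneg_cot_sub_iff_arccosGap_nonpos hρ hL₀ hL₁.le ht.1 (by nlinarith [ht.2])
  have hgb : 0 < arccosGap ρ L b := by
    rw [← not_le, ← hkey b ⟨hb₀, le_rfl⟩, hLb, not_le]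
    linarith [cot_add_cot_pos hρ hb₀ (by nlinarith)]
  rw [sep_ext_iff.2 hkey]
  refine exists_unique_Ioc_eq_of_nonpos continuous_arccosGap.continuousOn hgb ?_ ?_
  · obtain ⟨t, ht, hgt⟩ := (hasDerivAt_arccosGap (abs_lt.2 ⟨by linarith, hcos₁⟩) 0
      ).exists_mem_Ioo_lt (by simpa using hL₁) hb₀
    exact ⟨t, ht, (hg₀ ▸ hgt).le⟩
  · intro s t hs hst htb ht
    exact (convexOn_arccosGap hcos₀ hcos₁ (by linarith)).nonpos_of_concaveOn
      ((concaveOn_arccosGap hcos₀ hcos₁ (by linarith)).subset (Icc_subset_Icc_right hbπ)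
        (convex_Icc _ _)) hg₀.le hgb hs.le hst htb ht
end

section
/- Fix ρ > 0 and 1/2 < α < 1. Define F(t) = coth((2α−1)t) − coth(t) − 2 coth(ρ) for t ∈ (0, ρ/(2α−1)]. Then F is strictly decreasing and there exists a unique t₋ ∈ (0, ρ/(2α−1)) such that {t ∈ (0, ρ/(2α−1)] : F(t) ≥ 0} = (0, t₋]. -/
/-!
Write `s = 2α - 1 ∈ (0, 1)`. Since `coth' = -1 / sinh²`, the derivative of
`coth (s t) - coth t` is `1 / sinh² t - s / sinh² (s t)`, which is negative because convexity of
`sinh` on `[0, ∞)` gives `sinh (s t) < s sinh t`, hence `sinh² (s t) < s sinh² t`. As `t → 0⁺`,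
`t (coth (s t) - coth t) → 1/s - 1 > 0` because `x coth x → 1`, so `F` is positive near `0`,
while `F (ρ / s) = -coth ρ - coth (ρ / s) < 0`. The intermediate value theorem gives a zero `t₋`
of `F`, and strict monotonicity makes `{F ≥ 0} = (0, t₋]`.
-/

noncomputable def coth (x : ℝ) : ℝ := Real.cosh x / Real.sinh x

open Real Filter Topology Set

lemma coth_pos {x : ℝ} (hx : 0 < x) : 0 < coth x :=
  div_pos (cosh_pos x) (sinh_pos_iff.2 hx)

lemma hasDerivAt_coth {x : ℝ} (hx : x ≠ 0) : HasDerivAt coth (-(sinh x ^ 2)⁻¹) x := by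
  refine ((hasDerivAt_cosh x).div (hasDerivAt_sinh x) (sinh_ne_zero.2 hx)).congr_deriv ?_
  rw [← sq, ← sq, ← neg_sub, cosh_sq, add_sub_cancel_left, neg_div, one_div]

lemma tendsto_mul_coth_nhdsNE_zero : Tendsto (fun x => x * coth x) (𝓝[≠] 0) (𝓝 1) := by
  have hslope : Tendsto (fun x => x⁻¹ * sinh x) (𝓝[≠] 0) (𝓝 1) := by
    simpa using (hasDerivAt_sinh 0).tendsto_slope_zero
  have hcosh : Tendsto cosh (𝓝[≠] 0) (𝓝 1) := by
    simpa using (continuous_cosh.tendsto 0).mono_left nhdsWithin_le_nhds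
  refine (div_one (1 : ℝ) ▸ hcosh.div hslope one_ne_zero).congr' ?_
  filter_upwards [self_mem_nhdsWithin] with x hx
  rw [Pi.div_apply, coth]
  field_simp

lemma strictConvexOn_sinh : StrictConvexOn ℝ (Ici 0) sinh :=
  strictConvexOn_of_deriv2_pos (convex_Ici 0) continuous_sinh.continuousOn fun x hx => by
    simpa [Real.deriv_sinh, Real.deriv_cosh] using hx

lemma sinh_mul_lt_mul_sinh {s t : ℝ} (hs0 : 0 < s) (hs1 : s < 1) (ht : 0 < t) :
    sinh (s * t) < s * sinh t := by
  simpa using strictConvexOn_sinh.2 (mem_Ici.2 ht.le) (mem_Ici.2 le_rfl) ht.ne' hs0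
    (sub_pos.2 hs1) (by ring)

section CothDifference

variable {s : ℝ}

lemma hasDerivAt_coth_mul_sub_coth (hs : s ≠ 0) {t : ℝ} (ht : t ≠ 0) :
    HasDerivAt (fun t => coth (s * t) - coth t)
      ((sinh t ^ 2)⁻¹ - (sinh (s * t) ^ 2)⁻¹ * s) t :=
  (((hasDerivAt_coth (mul_ne_zero hs ht)).comp t ((hasDerivAt_id t).const_mul s)).sub
    (hasDerivAt_coth ht)).congr_deriv (by simp only [mul_one]; ring)

lemma continuousOn_coth_mul_sub_coth (hs : s ≠ 0) :
    ContinuousOn (fun t => coth (s * t) - coth t) (Ioi 0) := fun _ ht =>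
  (hasDerivAt_coth_mul_sub_coth hs (ne_of_gt ht)).continuousAt.continuousWithinAt

lemma strictAntiOn_coth_mul_sub_coth (hs0 : 0 < s) (hs1 : s < 1) :
    StrictAntiOn (fun t => coth (s * t) - coth t) (Ioi 0) := by
  refine strictAntiOn_of_deriv_neg (convex_Ioi 0) (continuousOn_coth_mul_sub_coth hs0.ne')
    fun t ht => ?_
  rw [interior_Ioi, mem_Ioi] at ht
  rw [(hasDerivAt_coth_mul_sub_coth hs0.ne' ht.ne').deriv, sub_neg, inv_mul_eq_div,
    lt_div_iff₀ (pow_pos (sinh_pos_iff.2 (mul_pos hs0 ht)) 2),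
    inv_mul_lt_iff₀ (pow_pos (sinh_pos_iff.2 ht) 2)]
  have hst := sinh_pos_iff.2 (mul_pos hs0 ht)
  have h := sinh_mul_lt_mul_sinh hs0 hs1 ht
  nlinarith

lemma tendsto_coth_mul_sub_coth_nhdsGT_zero (hs0 : 0 < s) (hs1 : s < 1) :
    Tendsto (fun t => coth (s * t) - coth t) (𝓝[>] 0) atTop := by
  have hscale : Tendsto (s * ·) (𝓝[>] 0) (𝓝[≠] 0) :=
    tendsto_nhdsWithin_iff.2
      ⟨by simpa using ((continuous_const_mul s).tendsto 0).mono_left nhdsWithin_le_nhds,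
        eventually_nhdsWithin_of_forall fun t ht => mul_ne_zero hs0.ne' (ne_of_gt ht)⟩
  have hmul : Tendsto (fun t => s⁻¹ * (s * t * coth (s * t)) - t * coth t) (𝓝[>] 0)
      (𝓝 (s⁻¹ * 1 - 1)) :=
    ((tendsto_mul_coth_nhdsNE_zero.comp hscale).const_mul _).sub
      (tendsto_mul_coth_nhdsNE_zero.mono_left (nhdsGT_le_nhdsNE 0))
  have hpos : 0 < s⁻¹ * 1 - 1 := by rw [mul_one, sub_pos]; exact (one_lt_inv₀ hs0).2 hs1
  refine (tendsto_inv_nhdsGT_zero.atTop_mul_pos hpos hmul).congr' ?_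
  filter_upwards [self_mem_nhdsWithin] with t (ht : 0 < t)
  field_simp

end CothDifference

theorem StrictAntiOn.sep_le_eq {α β : Type*} [LinearOrder α] [Preorder β] {f : α → β} {s : Set α}
    (hf : StrictAntiOn f s) {a : α} (ha : a ∈ s) : {x ∈ s | f a ≤ f x} = {x ∈ s | x ≤ a} :=
  Set.ext fun _ => and_congr_right fun hx => hf.le_iff_ge ha hx

/-- For `ρ > 0`, `1/2 < α < 1`, the function
`F(t) = coth((2α−1)t) − coth t − 2 coth ρ` on `(0, ρ/(2α−1)]` is strictly decreasing and
is nonnegative exactly on an interval `(0, tm]` for a unique `tm ∈ (0, ρ/(2α−1))`. -/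
theorem coth_threshold_unique (ρ α : ℝ) (hρ : 0 < ρ) (hα1 : 1 / 2 < α) (hα2 : α < 1) :
    StrictAntiOn (fun t => coth ((2 * α - 1) * t) - coth t - 2 * coth ρ)
      (Set.Ioc 0 (ρ / (2 * α - 1))) ∧
    ∃! tm : ℝ, tm ∈ Set.Ioo 0 (ρ / (2 * α - 1)) ∧
      {t ∈ Set.Ioc 0 (ρ / (2 * α - 1)) |
          0 ≤ coth ((2 * α - 1) * t) - coth t - 2 * coth ρ} =
        Set.Ioc 0 tm := by
  set s := 2 * α - 1
  have hs0 : 0 < s := by linarith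
  have hs1 : s < 1 := by linarith
  have hc : 0 < ρ / s := div_pos hρ hs0
  set F := fun t => coth (s * t) - coth t - 2 * coth ρ
  have hanti : StrictAntiOn F (Ioi 0) := fun x hx y hy hxy =>
    sub_lt_sub_right (strictAntiOn_coth_mul_sub_coth hs0 hs1 hx hy hxy) _
  have hFc : F (ρ / s) < 0 := by
    simp only [F, mul_div_cancel₀ ρ hs0.ne']
    linarith [coth_pos hρ, coth_pos hc]
  obtain ⟨a, hFa, ha⟩ : ∃ a, 2 * coth ρ < coth (s * a) - coth a ∧ a ∈ Ioo 0 (ρ / s) :=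
    (((tendsto_coth_mul_sub_coth_nhdsGT_zero hs0 hs1).eventually_gt_atTop _).and
      (Ioo_mem_nhdsGT hc)).exists
  obtain ⟨tm, htm, hFtm : F tm = 0⟩ := intermediate_value_Ioo' ha.2.le
    (((continuousOn_coth_mul_sub_coth hs0.ne').sub continuousOn_const).mono
      fun t ht => lt_of_lt_of_le ha.1 ht.1) ⟨hFc, sub_pos.2 hFa⟩
  have htm0 : tm ∈ Ioo 0 (ρ / s) := ⟨ha.1.trans htm.1, htm.2⟩
  have hanti' : StrictAntiOn F (Ioc 0 (ρ / s)) := hanti.mono Ioc_subset_Ioi_self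
  have hset : {t ∈ Ioc 0 (ρ / s) | 0 ≤ F t} = Ioc 0 tm := by
    have h := hanti'.sep_le_eq (Ioo_subset_Ioc_self htm0)
    rw [hFtm] at h
    rw [h]
    show Ioc 0 (ρ / s) ∩ Iic tm = _
    rw [Ioc_inter_Iic, min_eq_right htm.2.le]
  refine ⟨hanti', tm, ⟨htm0, hset⟩, fun y ⟨hy, hyset⟩ => ?_⟩
  exact ((Ioc_eq_Ioc_iff (Or.inl hy.1)).1 (hyset.symm.trans hset)).2
end

section
/- Let 1/2 < α ≤ 1, ρ > 0 and r > 0 satisfy 2αρ/(2α−1) < r ≤ π. Then (α/√(2α−1)) · sin(ρ) < sin(r/2). -/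
/-!
Put `s = (2α - 1)/α ∈ (0, 1]` and `τ = r/2 ∈ (0, π/2]`. The hypothesis says `ρ < sτ`, so
`sin ρ < sin (sτ)`, and since `α² / (2α - 1) = 1 / (s(2 - s))` it remains to show
`sin² (sτ) ≤ s(2 - s) sin² τ`. This follows from
`sin² τ - sin² (sτ) = sin ((1 + s)τ) sin ((1 - s)τ)`, where by concavity of `sin` on `[0, π]`
both factors are at least `(1 - s) sin τ`.
-/

open Real

namespace Real

lemma mul_sin_le_sin_mul {a x : ℝ} (ha₀ : 0 ≤ a) (ha₁ : a ≤ 1) (hx₀ : 0 ≤ x) (hxπ : x ≤ π) :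
    a * sin x ≤ sin (a * x) := by
  simpa using strictConcaveOn_sin_Icc.concaveOn.2 ⟨hx₀, hxπ⟩ ⟨le_rfl, pi_pos.le⟩ ha₀
    (sub_nonneg.2 ha₁) (add_sub_cancel a 1)

lemma one_sub_mul_sin_le_sin_one_add_mul {s τ : ℝ} (hs₀ : 0 ≤ s) (hs₁ : s ≤ 1) (hτ₀ : 0 ≤ τ)
    (hτ : τ ≤ π / 2) : (1 - s) * sin τ ≤ sin ((1 + s) * τ) := by
  -- `(1 + s)τ` is the convex combination `(1 - s) • τ + s • 2τ` of two points of `[0, π]`.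
  have hconc := strictConcaveOn_sin_Icc.concaveOn.2 (⟨hτ₀, by linarith⟩ : τ ∈ Set.Icc 0 π)
    (⟨by linarith, by linarith⟩ : 2 * τ ∈ Set.Icc 0 π) (sub_nonneg.2 hs₁) hs₀ (sub_add_cancel 1 s)
  have hsin₂ : 0 ≤ sin (2 * τ) := sin_nonneg_of_nonneg_of_le_pi (by linarith) (by linarith)
  calc (1 - s) * sin τ ≤ (1 - s) * sin τ + s * sin (2 * τ) :=
        le_add_of_nonneg_right (mul_nonneg hs₀ hsin₂)
    _ ≤ sin ((1 - s) * τ + s * (2 * τ)) := hconc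
    _ = sin ((1 + s) * τ) := by ring_nf

lemma sin_sq_sub_sin_sq (x y : ℝ) : sin x ^ 2 - sin y ^ 2 = sin (x + y) * sin (x - y) := by
  rw [sin_add, sin_sub]
  linear_combination sin y ^ 2 * sin_sq_add_cos_sq x - sin x ^ 2 * sin_sq_add_cos_sq y

lemma sin_mul_sq_le {s τ : ℝ} (hs₀ : 0 ≤ s) (hs₁ : s ≤ 1) (hτ₀ : 0 ≤ τ) (hτ : τ ≤ π / 2) :
    sin (s * τ) ^ 2 ≤ s * (2 - s) * sin τ ^ 2 := by
  have hplus := one_sub_mul_sin_le_sin_one_add_mul hs₀ hs₁ hτ₀ hτ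
  have hminus : (1 - s) * sin τ ≤ sin ((1 - s) * τ) :=
    mul_sin_le_sin_mul (by linarith) (by linarith) hτ₀ (by linarith)
  have hnonneg : 0 ≤ (1 - s) * sin τ :=
    mul_nonneg (by linarith) (sin_nonneg_of_nonneg_of_le_pi hτ₀ (by linarith))
  have hdiff : sin τ ^ 2 - sin (s * τ) ^ 2 = sin ((1 + s) * τ) * sin ((1 - s) * τ) := by
    rw [sin_sq_sub_sin_sq]; ring_nf
  nlinarith [mul_le_mul hplus hminus hnonneg (hnonneg.trans hplus)]

lemma sin_mul_le_sqrt_mul_sin {s τ : ℝ} (hs₀ : 0 ≤ s) (hs₁ : s ≤ 1) (hτ₀ : 0 ≤ τ)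
    (hτ : τ ≤ π / 2) : sin (s * τ) ≤ √(s * (2 - s)) * sin τ := by
  rw [← sqrt_sq (sin_nonneg_of_nonneg_of_le_pi hτ₀ (by linarith)), ← sqrt_mul' _ (sq_nonneg _)]
  exact le_sqrt_of_sq_le (sin_mul_sq_le hs₀ hs₁ hτ₀ hτ)

end Real

/-- If `1/2 < α ≤ 1`, `ρ > 0` and `2αρ/(2α−1) < r ≤ π`, then
`(α/√(2α−1)) · sin ρ < sin (r/2)`. -/
theorem estimated_ball_in_half_ball (α ρ r : ℝ) (hα1 : 1 / 2 < α) (hα2 : α ≤ 1)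
    (hρ : 0 < ρ) (h1 : 2 * α * ρ / (2 * α - 1) < r) (h2 : r ≤ Real.pi) :
    α / Real.sqrt (2 * α - 1) * Real.sin ρ < Real.sin (r / 2) := by
  have hα : 0 < α := by linarith
  have hα' : 0 < 2 * α - 1 := by linarith
  set s := (2 * α - 1) / α
  have hs₁ : s ≤ 1 := (div_le_one hα).2 (by linarith)
  have hτ : 0 < r / 2 := half_pos ((div_pos (by positivity) hα').trans h1)
  have hsr : s * (r / 2) ≤ r / 2 := mul_le_of_le_one_left hτ.le hs₁
  have hρs : ρ < s * (r / 2) := by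
    rw [div_lt_iff₀ hα'] at h1
    rw [div_mul_div_comm, lt_div_iff₀ (by positivity)]
    linarith
  have hcoeff : α / √(2 * α - 1) * √(s * (2 - s)) = 1 := by
    have hsq : s * (2 - s) = (√(2 * α - 1) / α) ^ 2 := by
      simp only [s]
      rw [div_pow, sq_sqrt hα'.le]
      field_simp
      ring
    rw [hsq, sqrt_sq (by positivity), div_mul_div_comm, mul_comm α, div_self (by positivity)]
  calc α / √(2 * α - 1) * sin ρ < α / √(2 * α - 1) * sin (s * (r / 2)) := by
        gcongr
        exact strictMonoOn_sin ⟨by linarith [pi_pos], by linarith⟩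
          ⟨by linarith [pi_pos], by linarith⟩ hρs
    _ ≤ α / √(2 * α - 1) * (√(s * (2 - s)) * sin (r / 2)) := by
        gcongr
        exact sin_mul_le_sqrt_mul_sin (by positivity) hs₁ hτ.le (by linarith)
    _ = sin (r / 2) := by rw [← mul_assoc, hcoeff, one_mul]
end

section
/- For every θ ∈ (0,1), tan(θπ/2)/(θπ/2) < (2−θ)/(1−θ). -/
open Real

lemma Real.tan_div_self_lt_inv_cos {x : ℝ} (hx₀ : 0 < x) (hx : x < π / 2) :
    tan x / x < (cos x)⁻¹ := by
  have hcos : 0 < cos x := cos_pos_of_mem_Ioo ⟨by linarith [pi_pos], hx⟩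
  have hsin : sin x / x < 1 := (div_lt_one hx₀).2 (sin_lt hx₀)
  calc tan x / x = sin x / x * (cos x)⁻¹ := by rw [tan_eq_sin_div_cos]; ring
    _ < 1 * (cos x)⁻¹ := by gcongr
    _ = (cos x)⁻¹ := one_mul _

lemma Real.one_sub_le_cos_mul_pi_div_two {θ : ℝ} (h0 : 0 ≤ θ) (h1 : θ ≤ 1) :
    1 - θ ≤ cos (θ * π / 2) := by
  have h := one_sub_mul_le_cos (x := θ * π / 2) (by positivity) (by nlinarith [pi_pos])
  rwa [show 2 / π * (θ * π / 2) = θ by field_simp] at h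

/-- For every `θ ∈ (0,1)`, `tan(θπ/2)/(θπ/2) < (2−θ)/(1−θ)`. -/
theorem tan_div_lt (θ : ℝ) (h0 : 0 < θ) (h1 : θ < 1) :
    Real.tan (θ * Real.pi / 2) / (θ * Real.pi / 2) < (2 - θ) / (1 - θ) := by
  have hθ : 0 < 1 - θ := by linarith
  have hx : θ * π / 2 < π / 2 := by nlinarith [pi_pos]
  calc tan (θ * π / 2) / (θ * π / 2) < (cos (θ * π / 2))⁻¹ :=
        tan_div_self_lt_inv_cos (by positivity) hx
    _ ≤ (1 - θ)⁻¹ := inv_anti₀ hθ (one_sub_le_cos_mul_pi_div_two h0.le h1.le)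
    _ < (2 - θ) / (1 - θ) := by
        rw [inv_eq_one_div]
        gcongr
        linarith
end

section
/- Let M be a complete Riemannian manifold, N ≥ 3, (x₁,…,x_N) ∈ M^N and let m be a Fréchet median of μ = (1/N) Σ δ_{x_k}. Let γ : [0,∞) → M be a unit-speed geodesic with γ(0) = x₁ and γ(d(x₁,m)) = m, minimizing between x₁ and m. Then for every t ∈ [0, d(x₁,m)], m is a Fréchet median of the measure (1/N)(δ_{γ(t)} + Σ_{k=2}^N δ_{x_k}). -/
open Metric

/-- Moving a data point towards a median along a unit-speed minimizing
geodesic keeps the median: if `m` is a Fréchet median of `(1/N) ∑ δ_{x_k}` and `γ` is a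
unit-speed minimizing geodesic with `γ 0 = x₁` (here `x k₀` with `k₀ = 0`) and
`γ (d(x₁,m)) = m`, then for every `t ∈ [0, d(x₁,m)]`, `m` is a Fréchet median of
`(1/N)(δ_{γ(t)} + ∑_{k ≥ 2} δ_{x_k})`. (Stated in a complete metric space; a complete
Riemannian manifold is a special case.) -/
theorem frechet_median_stable_under_moving_point_towards_it
    {M : Type*} [MetricSpace M] [CompleteSpace M]
    {N : ℕ} (hN : 3 ≤ N) (x : Fin N → M) (k₀ : Fin N) (hk₀ : (k₀ : ℕ) = 0) (m : M)
    (hmed : ∀ y : M, ((N : ℝ)⁻¹ * ∑ k, dist m (x k)) ≤ (N : ℝ)⁻¹ * ∑ k, dist y (x k))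
    (γ : ℝ → M)
    (hγ : ∀ s ∈ Set.Icc (0 : ℝ) (dist (x k₀) m), ∀ s' ∈ Set.Icc (0 : ℝ) (dist (x k₀) m),
      dist (γ s) (γ s') = |s - s'|)
    (hγ0 : γ 0 = x k₀) (hγ1 : γ (dist (x k₀) m) = m)
    (t : ℝ) (ht : t ∈ Set.Icc (0 : ℝ) (dist (x k₀) m)) :
    ∀ y : M,
      ((N : ℝ)⁻¹ * (dist m (γ t) + ∑ k ∈ Finset.univ.erase k₀, dist m (x k))) ≤
        (N : ℝ)⁻¹ * (dist y (γ t) + ∑ k ∈ Finset.univ.erase k₀, dist y (x k)) := by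
  intro y
  obtain ⟨ht0, htD⟩ := ht
  have hD : (0 : ℝ) ≤ dist (x k₀) m := dist_nonneg
  have hNpos : (0 : ℝ) < (N : ℝ)⁻¹ := by positivity
  -- dist m (γ t) = dist (x k₀) m - t
  have h1 : dist m (γ t) = dist (x k₀) m - t := by
    have := hγ (dist (x k₀) m) ⟨hD, le_refl _⟩ t ⟨ht0, htD⟩
    rw [hγ1] at this
    rw [this, abs_of_nonneg (by linarith)]
  -- dist y (x k₀) ≤ dist y (γ t) + t
  have h2 : dist y (x k₀) ≤ dist y (γ t) + t := by
    have h0t := hγ 0 ⟨le_refl _, hD⟩ t ⟨ht0, htD⟩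
    rw [hγ0] at h0t
    have : dist (x k₀) (γ t) = t := by
      rw [dist_comm] at h0t; rw [dist_comm, h0t, abs_of_nonpos (by linarith), neg_sub,
        sub_zero]
    calc dist y (x k₀) ≤ dist y (γ t) + dist (γ t) (x k₀) := dist_triangle _ _ _
      _ = dist y (γ t) + t := by rw [dist_comm (γ t) (x k₀), this]
  -- split sums
  have hsum : ∀ z : M, ∑ k, dist z (x k) =
      dist z (x k₀) + ∑ k ∈ Finset.univ.erase k₀, dist z (x k) := fun z =>
    (Finset.add_sum_erase _ _ (Finset.mem_univ k₀)).symm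
  have hmy := hmed y
  rw [hsum m, hsum y] at hmy
  have hmy' : dist m (x k₀) + ∑ k ∈ Finset.univ.erase k₀, dist m (x k) ≤
      dist y (x k₀) + ∑ k ∈ Finset.univ.erase k₀, dist y (x k) :=
    le_of_mul_le_mul_left (by simpa [mul_comm] using hmy) hNpos
  have hmx : dist m (x k₀) = dist (x k₀) m := dist_comm _ _
  apply mul_le_mul_of_nonneg_left _ hNpos.le
  linarith
end

section
/- Let M be a Riemannian manifold of dimension l ≥ 2 and N ≥ 2. The set V of tuples (x, n₁, …, n_N) with x ∈ M, each n_k a unit vector in T_x M, Σ n_k = 0, and such that some pair n_{k₁}, n_{k₂} is linearly independent, is a smooth submanifold of the N-fold fiber product of the unit sphere bundle of dimension N(l−1). -/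
open scoped Manifold

/-- The set `V` of tuples `(x, n₁, …, n_N)` with `x ∈ ℝˡ` (the Euclidean model of an
`l`-dimensional Riemannian manifold, whose tangent spaces are canonically `ℝˡ`), each
`n_k` a unit tangent vector at `x`, `∑ n_k = 0`, and some pair `n_{k₁}, n_{k₂}` linearly
independent. -/
def V (l N : ℕ) : Set (EuclideanSpace ℝ (Fin l) × (Fin N → EuclideanSpace ℝ (Fin l))) :=
  {p | (∀ k, ‖p.2 k‖ = 1) ∧ (∑ k, p.2 k) = 0 ∧
    ∃ k₁ k₂ : Fin N, LinearIndependent ℝ ![p.2 k₁, p.2 k₂]}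

/-!
`V` is the zero set of `f (x, n) = ((‖n_k‖² - 1)_k, ∑ n_k)` inside the open set where two of
the `n_k` are linearly independent, and `0` is a regular value there: to reach `((a_k)_k, b)`,
move each `n_k` by `(a_k / 2) n_k` and correct the sum by `u₁ + u₂` with `u_i ⊥ n_{k_i}`, which
exists because the functionals `⟪n_{k₁}, ·⟫, ⟪n_{k₂}, ·⟫` are independent (their Gram matrix is
invertible). By the implicit function theorem, near each point of the level set `f` is the
first coordinate of a local diffeomorphism `E ≅ F × G` with
`dim G = dim E - dim F = (l + N l) - (N + l) = N (l - 1)`, and the second coordinates of these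
slice charts, restricted to the level set, form a smooth atlas.
-/

open scoped ContDiff InnerProductSpace Matrix
open Set Module

namespace OpenPartialHomeomorph

variable {E F G : Type*} [TopologicalSpace E] [Zero F] [TopologicalSpace F]
  [TopologicalSpace G] {Z : Set E}

def Straightens (Φ : OpenPartialHomeomorph E (F × G)) (Z : Set E) : Prop :=
  ∀ x ∈ Φ.source, x ∈ Z ↔ (Φ x).1 = 0

theorem symm_mk_zero_mem {Φ : OpenPartialHomeomorph E (F × G)} (hZ : Φ.Straightens Z)
    {y : G} (hy : (0, y) ∈ Φ.target) : Φ.symm (0, y) ∈ Z := by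
  rw [hZ _ (Φ.map_target hy), Φ.right_inv hy]

/-- `z₀` is only a junk value for the inverse outside the target. -/
noncomputable def sliceChart (Φ : OpenPartialHomeomorph E (F × G)) (hZ : Φ.Straightens Z)
    (z₀ : Z) : OpenPartialHomeomorph Z G := by
  classical
  have hΦ (v : Z) (hv : (v : E) ∈ Φ.source) : Φ v = (0, (Φ v).2) :=
    Prod.ext ((hZ v hv).1 v.2) rfl
  exact
  { toFun v := (Φ v).2
    invFun y := if h : Φ.symm (0, y) ∈ Z then ⟨_, h⟩ else z₀
    source := Subtype.val ⁻¹' Φ.source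
    target := {y | (0, y) ∈ Φ.target}
    map_source' v hv := by
      simpa only [mem_ofPred_eq, ← hΦ v hv] using Φ.map_source hv
    map_target' y hy := by
      simpa only [mem_preimage, dif_pos (symm_mk_zero_mem hZ hy)] using Φ.map_target hy
    left_inv' v hv := by
      have h : Φ.symm (0, (Φ v).2) = v := by rw [← hΦ v hv, Φ.left_inv hv]
      simp only [h, dif_pos v.2]
    right_inv' y hy := by
      simp only [dif_pos (symm_mk_zero_mem hZ hy), Φ.right_inv hy]
    open_source := Φ.open_source.preimage continuous_subtype_val
    open_target := Φ.open_target.preimage (continuous_const.prodMk continuous_id)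
    continuousOn_toFun :=
      continuous_snd.comp_continuousOn (Φ.continuousOn.comp continuous_subtype_val.continuousOn
        fun _ hv => hv)
    continuousOn_invFun := by
      rw [Topology.IsInducing.subtypeVal.continuousOn_iff]
      refine (Φ.continuousOn_symm.comp (continuous_const.prodMk continuous_id).continuousOn
        fun _ hy => hy).congr fun y hy => ?_
      exact congrArg Subtype.val (dif_pos (symm_mk_zero_mem hZ hy)) }

theorem coe_sliceChart_symm_apply (Φ : OpenPartialHomeomorph E (F × G))
    (hZ : Φ.Straightens Z) (z₀ : Z) {y : G} (hy : (0, y) ∈ Φ.target) :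
    ((Φ.sliceChart hZ z₀).symm y : E) = Φ.symm (0, y) :=
  congrArg Subtype.val (dif_pos (symm_mk_zero_mem hZ hy))

end OpenPartialHomeomorph

section SliceCharts

variable {𝕜 E F G : Type*} [NontriviallyNormedField 𝕜] [NormedAddCommGroup E] [NormedSpace 𝕜 E]
  [NormedAddCommGroup F] [NormedSpace 𝕜 F] [NormedAddCommGroup G] [NormedSpace 𝕜 G]
  {Z : Set E} {n : ℕ∞ω}

theorem OpenPartialHomeomorph.contDiffOn_sliceChart_symm_trans
    {Φ Ψ : OpenPartialHomeomorph E (F × G)} {hΦZ : Φ.Straightens Z} {hΨZ : Ψ.Straightens Z}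
    (z₀ z₁ : Z)
    (hΦ : ContDiffOn 𝕜 n Φ.symm Φ.target) (hΨ : ContDiffOn 𝕜 n Ψ Ψ.source) :
    ContDiffOn 𝕜 n ((Φ.sliceChart hΦZ z₀).symm ≫ₕ Ψ.sliceChart hΨZ z₁)
      ((Φ.sliceChart hΦZ z₀).symm ≫ₕ Ψ.sliceChart hΨZ z₁).source := by
  have hslice : ContDiff 𝕜 n fun y : G => ((0 : F), y) := contDiff_const.prodMk contDiff_id
  refine (contDiffOn_snd.comp (hΨ.comp (hΦ.comp hslice.contDiffOn fun y hy => hy.1)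
    fun y hy => ?_) (mapsTo_univ _ _)).congr fun y hy => ?_
  · have h : ((Φ.sliceChart hΦZ z₀).symm y : E) ∈ Ψ.source := hy.2
    rwa [Φ.coe_sliceChart_symm_apply hΦZ z₀ hy.1] at h
  · change (Ψ ((Φ.sliceChart hΦZ z₀).symm y : E)).2 = _
    rw [Φ.coe_sliceChart_symm_apply hΦZ z₀ hy.1]
    rfl

theorem exists_isManifold_of_forall_exists_sliceChart
    (h : ∀ p : Z, ∃ Φ : OpenPartialHomeomorph E (F × G), ↑p ∈ Φ.source ∧ Φ.Straightens Z ∧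
      ContDiffOn 𝕜 n Φ Φ.source ∧ ContDiffOn 𝕜 n Φ.symm Φ.target) :
    ∃ _ : ChartedSpace G Z, IsManifold 𝓘(𝕜, G) n Z := by
  choose Φ hpΦ hΦZ hΦ hΦsymm using h
  let _ : ChartedSpace G Z :=
    { atlas := range fun p : Z => (Φ p).sliceChart (hΦZ p) p
      chartAt p := (Φ p).sliceChart (hΦZ p) p
      mem_chart_source p := hpΦ p
      chart_mem_atlas p := mem_range_self p }
  refine ⟨‹_›, isManifold_of_contDiffOn _ _ _ ?_⟩
  rintro _ _ ⟨p, rfl⟩ ⟨q, rfl⟩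
  simpa using OpenPartialHomeomorph.contDiffOn_sliceChart_symm_trans p q (hΦsymm p) (hΦ q)

theorem OpenPartialHomeomorph.contDiffOn_symm_of_isInvertible [CompleteSpace E]
    (Φ : OpenPartialHomeomorph E F) (hΦ : ContDiffOn 𝕜 n Φ Φ.source)
    (hinv : ∀ x ∈ Φ.source, (fderiv 𝕜 Φ x).IsInvertible) :
    ContDiffOn 𝕜 n Φ.symm Φ.target := by
  intro y hy
  have hx := Φ.map_target hy
  obtain ⟨e, he⟩ := hinv _ hx
  refine (Φ.contDiffAt_symm (f₀' := e) hy ?_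
    (hΦ.contDiffAt (Φ.open_source.mem_nhds hx))).contDiffWithinAt
  rw [he]
  exact (differentiableAt_of_isInvertible_fderiv (hinv _ hx)).hasFDerivAt

end SliceCharts

section LevelSet

variable {𝕜 E F G : Type*} [RCLike 𝕜] [NormedAddCommGroup E] [NormedSpace 𝕜 E]
  [FiniteDimensional 𝕜 E] [NormedAddCommGroup F] [NormedSpace 𝕜 F] [FiniteDimensional 𝕜 F]
  [NormedAddCommGroup G] [NormedSpace 𝕜 G] [FiniteDimensional 𝕜 G]
  {f : E → F} {U : Set E} {n : ℕ∞ω}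

theorem ContinuousLinearMap.exists_isInvertible_prod_of_surjective {f' : E →L[𝕜] F}
    (hf' : Function.Surjective f') (hd : finrank 𝕜 E = finrank 𝕜 G + finrank 𝕜 F) :
    ∃ g : E →L[𝕜] G, (f'.prod g).IsInvertible := by
  have hrange : (f' : E →ₗ[𝕜] F).range = ⊤ := LinearMap.range_eq_top.2 hf'
  obtain ⟨π, hπ⟩ := f'.ker_closedComplemented_of_finiteDimensional_range
  obtain ⟨κ⟩ : Nonempty ((f' : E →ₗ[𝕜] F).ker ≃L[𝕜] G) := by
    refine FiniteDimensional.nonempty_continuousLinearEquiv_of_finrank_eq ?_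
    have := (f' : E →ₗ[𝕜] F).finrank_range_add_finrank_ker
    rw [hrange, finrank_top] at this
    omega
  have := FiniteDimensional.complete 𝕜 E
  have := FiniteDimensional.complete 𝕜 F
  have := FiniteDimensional.complete 𝕜 (f' : E →ₗ[𝕜] F).ker
  exact ⟨κ.toContinuousLinearMap.comp π, (f'.equivProdOfSurjectiveOfIsCompl π hrange
    (LinearMap.range_eq_of_proj hπ) (LinearMap.isCompl_of_proj hπ)).trans
    ((ContinuousLinearEquiv.refl 𝕜 F).prodCongr κ), ContinuousLinearMap.ext fun _ => rfl⟩

theorem exists_sliceChart_of_surjective_fderiv (hd : finrank 𝕜 E = finrank 𝕜 G + finrank 𝕜 F)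
    (hf : ContDiff 𝕜 n f) (hn : n ≠ 0) (hU : IsOpen U) {p : E} (hpU : p ∈ U)
    (hp : Function.Surjective (fderiv 𝕜 f p)) :
    ∃ Φ : OpenPartialHomeomorph E (F × G), p ∈ Φ.source ∧ Φ.Straightens (U ∩ f ⁻¹' {0}) ∧
      ContDiffOn 𝕜 n Φ Φ.source ∧ ContDiffOn 𝕜 n Φ.symm Φ.target := by
  have := FiniteDimensional.complete 𝕜 E
  obtain ⟨g, e, he⟩ := ContinuousLinearMap.exists_isInvertible_prod_of_surjective hp hd
  set φ : E → F × G := fun x => (f x, g x)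
  have hφ : ContDiff 𝕜 n φ := hf.prodMk g.contDiff
  have hφp : HasFDerivAt φ (e : E →L[𝕜] F × G) p :=
    he ▸ (hf.differentiable hn p).hasFDerivAt.prodMk g.hasFDerivAt
  have hφs := hφ.contDiffAt.hasStrictFDerivAt' hφp hn
  -- Shrinking to where `dφ` stays invertible makes the local inverse smooth on all its target.
  set Ω := {x | (fderiv 𝕜 φ x).IsInvertible}
  have hΩ : IsOpen Ω := ContinuousLinearEquiv.isOpen.preimage (hφ.continuous_fderiv hn)
  let Φ := (hφs.toOpenPartialHomeomorph φ).restrOpen (U ∩ Ω) (hU.inter hΩ)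
  have hΦsource : Φ.source = (hφs.toOpenPartialHomeomorph φ).source ∩ (U ∩ Ω) :=
    OpenPartialHomeomorph.restrOpen_source _ _ _
  have hΦ : ContDiffOn 𝕜 n Φ Φ.source := hφ.contDiffOn
  refine ⟨Φ, ?_, fun x hx => ?_, hΦ, Φ.contDiffOn_symm_of_isInvertible hΦ fun x hx => ?_⟩
  · rw [hΦsource]
    exact ⟨hφs.mem_toOpenPartialHomeomorph_source, hpU, e, hφp.fderiv.symm⟩
  · rw [hΦsource] at hx
    exact and_iff_right hx.2.1
  · rw [hΦsource] at hx
    exact hx.2.2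

theorem exists_isManifold_inter_preimage_zero (hd : finrank 𝕜 E = finrank 𝕜 G + finrank 𝕜 F)
    (hf : ContDiff 𝕜 n f) (hn : n ≠ 0) (hU : IsOpen U)
    (hsurj : ∀ p ∈ U ∩ f ⁻¹' {0}, Function.Surjective (fderiv 𝕜 f p)) :
    ∃ _ : ChartedSpace G ↥(U ∩ f ⁻¹' {0}), IsManifold 𝓘(𝕜, G) n ↥(U ∩ f ⁻¹' {0}) :=
  exists_isManifold_of_forall_exists_sliceChart fun p =>
    exists_sliceChart_of_surjective_fderiv hd hf hn hU p.2.1 (hsurj p p.2)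

end LevelSet

theorem exists_forall_inner_eq_of_linearIndependent {𝕜 G : Type*} [RCLike 𝕜]
    [NormedAddCommGroup G] [InnerProductSpace 𝕜 G] {ι : Type*} [Fintype ι] {v : ι → G}
    (hv : LinearIndependent 𝕜 v) (α : ι → 𝕜) : ∃ w : G, ∀ i, ⟪v i, w⟫_𝕜 = α i := by
  classical
  have hdet : (Matrix.gram 𝕜 v).det ≠ 0 := Matrix.det_gram_ne_zero_iff_linearIndependent.2 hv
  refine ⟨∑ j, ((Matrix.gram 𝕜 v)⁻¹ *ᵥ α) j • v j, fun i => ?_⟩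
  have hgram : (Matrix.gram 𝕜 v *ᵥ ((Matrix.gram 𝕜 v)⁻¹ *ᵥ α)) i = α i := by
    rw [Matrix.mulVec_mulVec, Matrix.mul_nonsing_inv _ (isUnit_iff_ne_zero.2 hdet),
      Matrix.one_mulVec]
  rw [← hgram]
  simp [inner_sum, inner_smul_right, Matrix.mulVec, dotProduct, Matrix.gram_apply, mul_comm]

theorem isOpen_setOf_exists_linearIndependent_pair {G : Type*} [NormedAddCommGroup G]
    [NormedSpace ℝ G] [FiniteDimensional ℝ G] {ι : Type*} :
    IsOpen {q : G × (ι → G) | ∃ k₁ k₂, LinearIndependent ℝ ![q.2 k₁, q.2 k₂]} := by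
  simp only [ofPred_exists]
  exact isOpen_iUnion fun k₁ => isOpen_iUnion fun k₂ =>
    isOpen_setOfPred_linearIndependent.preimage (by fun_prop)

section SphereSum

variable {G : Type*} [NormedAddCommGroup G] {ι : Type*} [Fintype ι]

variable (G ι) in
def sphereSumMap (q : G × (ι → G)) : (ι → ℝ) × G :=
  (fun k => ‖q.2 k‖ ^ 2 - 1, ∑ k, q.2 k)

theorem sphereSumMap_eq_zero_iff {q : G × (ι → G)} :
    sphereSumMap G ι q = 0 ↔ (∀ k, ‖q.2 k‖ = 1) ∧ ∑ k, q.2 k = 0 := by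
  simp [sphereSumMap, Prod.ext_iff, funext_iff, sub_eq_zero, pow_eq_one_iff_of_nonneg]

variable [InnerProductSpace ℝ G]

theorem exists_add_eq_of_linearIndependent {n₁ n₂ : G} (h : LinearIndependent ℝ ![n₁, n₂])
    (c : G) : ∃ u₁ u₂ : G, ⟪n₁, u₁⟫_ℝ = 0 ∧ ⟪n₂, u₂⟫_ℝ = 0 ∧ u₁ + u₂ = c := by
  obtain ⟨u, hu⟩ := exists_forall_inner_eq_of_linearIndependent h ![0, ⟪n₂, c⟫_ℝ]
  refine ⟨u, c - u, hu 0, ?_, add_sub_cancel u c⟩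
  have hu₂ : ⟪n₂, u⟫_ℝ = ⟪n₂, c⟫_ℝ := hu 1
  rw [inner_sub_right, hu₂, sub_self]

theorem contDiff_sphereSumMap {n : ℕ∞ω} : ContDiff ℝ n (sphereSumMap G ι) :=
  (contDiff_pi.2 fun k => ((contDiff_norm_sq ℝ).comp
    ((contDiff_apply ℝ G k).comp contDiff_snd)).sub contDiff_const).prodMk
    (ContDiff.sum fun k _ => (contDiff_apply ℝ G k).comp contDiff_snd)

theorem fderiv_sphereSumMap_apply (q v : G × (ι → G)) :
    fderiv ℝ (sphereSumMap G ι) q v = (fun k => 2 * ⟪q.2 k, v.2 k⟫_ℝ, ∑ k, v.2 k) := by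
  let P (k : ι) : G × (ι → G) →L[ℝ] G := (ContinuousLinearMap.proj k).comp (.snd ℝ G _)
  have hD : HasFDerivAt (sphereSumMap G ι)
      ((ContinuousLinearMap.pi fun k => (2 • innerSL ℝ (q.2 k)).comp (P k)).prod (∑ k, P k)) q :=
    (hasFDerivAt_pi.2 fun k => ((P k).hasFDerivAt.norm_sq).sub_const 1).prodMk
      (HasFDerivAt.fun_sum fun k _ => (P k).hasFDerivAt)
  rw [hD.fderiv]
  simp [P]

theorem surjective_fderiv_sphereSumMap {q : G × (ι → G)} (hq : ∀ k, ‖q.2 k‖ = 1)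
    (hind : ∃ k₁ k₂, LinearIndependent ℝ ![q.2 k₁, q.2 k₂]) :
    Function.Surjective (fderiv ℝ (sphereSumMap G ι) q) := by
  classical
  rintro ⟨a, b⟩
  obtain ⟨k₁, k₂, hind⟩ := hind
  obtain ⟨u₁, u₂, hu₁, hu₂, hu⟩ :=
    exists_add_eq_of_linearIndependent hind (b - ∑ k, (a k / 2) • q.2 k)
  have horth (k' : ι) (u : G) (hu : ⟪q.2 k', u⟫_ℝ = 0) (k : ι) :
      ⟪q.2 k, (Pi.single k' u : ι → G) k⟫_ℝ = 0 := by
    rcases eq_or_ne k k' with rfl | hk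
    · simpa using hu
    · simp [hk]
  refine ⟨(0, (fun k => (a k / 2) • q.2 k) + Pi.single k₁ u₁ + Pi.single k₂ u₂), ?_⟩
  rw [fderiv_sphereSumMap_apply]
  refine Prod.ext (funext fun k => ?_) ?_
  · simp [inner_add_right, real_inner_smul_right, horth k₁ u₁ hu₁, horth k₂ u₂ hu₂, hq,
      mul_div_cancel₀]
  · simp [Finset.sum_add_distrib, add_assoc, hu]

end SphereSum

theorem V_eq_inter_preimage_sphereSumMap (l N : ℕ) :
    V l N = {q | ∃ k₁ k₂, LinearIndependent ℝ ![q.2 k₁, q.2 k₂]} ∩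
      sphereSumMap (EuclideanSpace ℝ (Fin l)) (Fin N) ⁻¹' {0} := by
  ext q
  simp only [V, mem_ofPred_eq, mem_inter_iff, mem_preimage, mem_singleton_iff,
    sphereSumMap_eq_zero_iff]
  tauto

theorem finrank_eq_mul_pred_add (l N : ℕ) (hl : 1 ≤ l) :
    finrank ℝ (EuclideanSpace ℝ (Fin l) × (Fin N → EuclideanSpace ℝ (Fin l))) =
      finrank ℝ (EuclideanSpace ℝ (Fin (N * (l - 1)))) +
        finrank ℝ ((Fin N → ℝ) × EuclideanSpace ℝ (Fin l)) := by
  obtain ⟨m, rfl⟩ := Nat.exists_eq_add_of_le' hl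
  simp only [finrank_prod, finrank_euclideanSpace, Fintype.card_fin, finrank_pi_fintype,
    Finset.sum_const, Finset.card_univ, smul_eq_mul, Nat.add_one_sub_one, finrank_self]
  ring

theorem V_is_smooth_manifold_of_dim_general (l N : ℕ) (hl : 2 ≤ l) :
    ∃ cs : ChartedSpace (EuclideanSpace ℝ (Fin (N * (l - 1)))) (V l N),
      @IsManifold ℝ _ (EuclideanSpace ℝ (Fin (N * (l - 1)))) _ _
        (EuclideanSpace ℝ (Fin (N * (l - 1)))) _ (𝓡 (N * (l - 1))) (⊤ : ℕ∞) (V l N) _ cs := by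
  rw [V_eq_inter_preimage_sphereSumMap]
  exact exists_isManifold_inter_preimage_zero (finrank_eq_mul_pred_add l N (by omega))
    contDiff_sphereSumMap (by simp) isOpen_setOf_exists_linearIndependent_pair
    fun q hq => surjective_fderiv_sphereSumMap (sphereSumMap_eq_zero_iff.1 hq.2).1 hq.1

/-- `V` is a smooth manifold of dimension `N(l−1)`: it carries a
charted-space structure modeled on `ℝ^{N(l−1)}` making it a smooth manifold. -/
theorem V_is_smooth_manifold_of_dim (l N : ℕ) (hl : 2 ≤ l) (hN : 2 ≤ N) :
    ∃ cs : ChartedSpace (EuclideanSpace ℝ (Fin (N * (l - 1)))) (V l N),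
      @IsManifold ℝ _ (EuclideanSpace ℝ (Fin (N * (l - 1)))) _ _
        (EuclideanSpace ℝ (Fin (N * (l - 1)))) _ (𝓡 (N * (l - 1))) (⊤ : ℕ∞) (V l N) _ cs :=
  V_is_smooth_manifold_of_dim_general l N hl
end
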